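/- arXiv:2605.13608 — 14 statements merged into one kernel-verified Lean document; each statement's English description precedes it below -/
import Mathlib

section
/- Let C and D be categories and F : C → D a functor. If C has the amalgamation property and F is essentially surjective on objects and absorbing, then D has the amalgamation property. Moreover, if A is an amalgamation base in C and F is absorbing, then F(A) is an amalgamation base in D. -/
open CategoryTheory

universe v₁ v₂ u₁ u₂

/-- An object `A` is an amalgamation base if every span with vertex `A`
can be completed to a commutative square. -/
def IsAmalgamationBase {C : Type u₁} [Category.{v₁} C] (A : C) : Prop :=
  ∀ ⦃B X : C⦄ (α₁ : A ⟶ B) (α₂ : A ⟶ X),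
    ∃ (W : C) (β₁ : B ⟶ W) (β₂ : X ⟶ W), α₁ ≫ β₁ = α₂ ≫ β₂

/-- A functor `F : C ⥤ D` is absorbing if every `D`-morphism out of `F(X)` can be
absorbed back: there are `f' : X ⟶ Y'` in `C` and `g : Y ⟶ F(Y')` with `F(f') = f ≫ g`. -/
def Absorbing {C : Type u₁} [Category.{v₁} C] {D : Type u₂} [Category.{v₂} D]
    (F : C ⥤ D) : Prop :=
  ∀ (X : C) (Y : D) (f : F.obj X ⟶ Y),
    ∃ (Y' : C) (f' : X ⟶ Y') (g : Y ⟶ F.obj Y'), F.map f' = f ≫ g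

/-!
Absorb both legs of a span out of `F(A)` back into `C`, amalgamate the absorbed span at `A`,
and map the commutative square back along `F`. When `F` is essentially surjective every
object of `D` is isomorphic to some `F(A)`, and amalgamation bases are stable under isomorphism.
-/

theorem IsAmalgamationBase.of_epi {C : Type u₁} [Category.{v₁} C] {A A' : C}
    (e : A ⟶ A') [Epi e] (hA : IsAmalgamationBase A) : IsAmalgamationBase A' := by
  intro B X α₁ α₂
  obtain ⟨W, β₁, β₂, hW⟩ := hA (e ≫ α₁) (e ≫ α₂)
  exact ⟨W, β₁, β₂, (cancel_epi e).mp (by simpa using hW)⟩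

theorem Absorbing.isAmalgamationBase_obj {C : Type u₁} [Category.{v₁} C]
    {D : Type u₂} [Category.{v₂} D] {F : C ⥤ D} (hF : Absorbing F) {A : C}
    (hA : IsAmalgamationBase A) : IsAmalgamationBase (F.obj A) := by
  intro B X α₁ α₂
  obtain ⟨B', f₁, g₁, hf₁⟩ := hF A B α₁
  obtain ⟨X', f₂, g₂, hf₂⟩ := hF A X α₂
  obtain ⟨W, β₁, β₂, hW⟩ := hA f₁ f₂
  refine ⟨F.obj W, g₁ ≫ F.map β₁, g₂ ≫ F.map β₂, ?_⟩
  calc α₁ ≫ g₁ ≫ F.map β₁ = F.map (f₁ ≫ β₁) := by rw [F.map_comp, hf₁, Category.assoc]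
    _ = F.map (f₂ ≫ β₂) := by rw [hW]
    _ = α₂ ≫ g₂ ≫ F.map β₂ := by rw [F.map_comp, hf₂, Category.assoc]

/-- If `C` has the amalgamation property and `F` is essentially surjective on objects
and absorbing, then `D` has the amalgamation property; moreover an absorbing functor
maps amalgamation bases to amalgamation bases. -/
theorem stmt0 {C : Type u₁} [Category.{v₁} C] {D : Type u₂} [Category.{v₂} D]
    (F : C ⥤ D) (habs : Absorbing F) :
    ((∀ A : C, IsAmalgamationBase A) →
      (∀ Y : D, ∃ X : C, Nonempty (F.obj X ≅ Y)) →
      (∀ A : D, IsAmalgamationBase A)) ∧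
    (∀ A : C, IsAmalgamationBase A → IsAmalgamationBase (F.obj A)) := by
  refine ⟨fun hC hF A => ?_, fun A => habs.isAmalgamationBase_obj⟩
  obtain ⟨A', ⟨e⟩⟩ := hF A
  exact (habs.isAmalgamationBase_obj (hC A')).of_epi e.hom
end

section
/- Let C and D be categories and F : C → D a functor. If C has the cofinal amalgamation property and F is cofinal and absorbing, then D has the cofinal amalgamation property. -/
open CategoryTheory

universe v₁ v₂ u₁ u₂

/-- The cofinal amalgamation property: every object admits a morphism
into an amalgamation base. -/
def HasCAP (C : Type u₁) [Category.{v₁} C] : Prop :=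
  ∀ A : C, ∃ (B : C) (_ : A ⟶ B), IsAmalgamationBase B

/-- A functor `F : C ⥤ D` is cofinal if every `D`-object admits a morphism into
some `F(X)`. -/
def Cofinal {C : Type u₁} [Category.{v₁} C] {D : Type u₂} [Category.{v₂} D]
    (F : C ⥤ D) : Prop :=
  ∀ Y : D, ∃ X : C, Nonempty (Y ⟶ F.obj X)

/-!
An absorbing functor sends amalgamation bases to amalgamation bases: both legs of a span out of
`F(B)` are absorbed into images of `C`-morphisms out of `B`, and an amalgam of those in `C` maps to
an amalgam in `D`. Cofinality of `F` then sends every `D`-object into such an `F(B)`.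
-/

theorem IsAmalgamationBase.map_of_absorbing {C : Type u₁} [Category.{v₁} C] {D : Type u₂}
    [Category.{v₂} D] {F : C ⥤ D} (habs : Absorbing F) {B : C} (hB : IsAmalgamationBase B) :
    IsAmalgamationBase (F.obj B) := by
  intro Y₁ Y₂ α₁ α₂
  obtain ⟨Y₁', f₁, g₁, hf₁⟩ := habs B Y₁ α₁
  obtain ⟨Y₂', f₂, g₂, hf₂⟩ := habs B Y₂ α₂
  obtain ⟨W, β₁, β₂, hW⟩ := hB f₁ f₂
  refine ⟨F.obj W, g₁ ≫ F.map β₁, g₂ ≫ F.map β₂, ?_⟩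
  rw [← Category.assoc, ← hf₁, ← Category.assoc, ← hf₂, ← F.map_comp, ← F.map_comp, hW]

/-- If `C` has the cofinal amalgamation property and `F : C ⥤ D` is cofinal and
absorbing, then `D` has the cofinal amalgamation property. -/
theorem stmt1 {C : Type u₁} [Category.{v₁} C] {D : Type u₂} [Category.{v₂} D]
    (F : C ⥤ D) (hC : HasCAP C) (hcof : Cofinal F) (habs : Absorbing F) :
    HasCAP D := by
  intro A
  obtain ⟨X, ⟨h⟩⟩ := hcof A
  obtain ⟨B, b, hB⟩ := hC X
  exact ⟨F.obj B, h ≫ F.map b, hB.map_of_absorbing habs⟩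
end

section
/- Let C and D be categories and F : C → D a functor. If C has the weak amalgamation property and F is cofinal and weakly absorbing, then D has the weak amalgamation property. -/
/-!
Given `A₀ : D`, cofinality gives `u : A₀ ⟶ F(X₀)`, the weak amalgamation property of `C` gives
an amalgamable `i : X₀ ⟶ X`, and weak absorption gives `e : F(X) ⟶ Z`. Any two morphisms out
of `Z` are absorbed into images of `C`-morphisms out of `X`, which `i` amalgamates; applying
`F` shows that `u ≫ F(i) ≫ e` is amalgamable.
-/

open CategoryTheory

universe v₁ v₂ u₁ u₂

/-- A morphism `i : A₀ ⟶ A` is amalgamable if every two morphisms out of `A`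
can be equalized after precomposition with `i`. -/
def IsAmalgamable {C : Type u₁} [Category.{v₁} C] {A₀ A : C} (i : A₀ ⟶ A) : Prop :=
  ∀ ⦃B X : C⦄ (α₁ : A ⟶ B) (α₂ : A ⟶ X),
    ∃ (W : C) (β₁ : B ⟶ W) (β₂ : X ⟶ W), i ≫ α₁ ≫ β₁ = i ≫ α₂ ≫ β₂

/-- The weak amalgamation property: every object admits an amalgamable morphism
out of it. -/
def HasWAP (C : Type u₁) [Category.{v₁} C] : Prop :=
  ∀ A₀ : C, ∃ (A : C) (i : A₀ ⟶ A), IsAmalgamable i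

/-- A functor `F : C ⥤ D` is weakly absorbing if for every `C`-object `X` there is a
`D`-morphism `e : F(X) ⟶ Z` such that every `D`-morphism `f : Z ⟶ Y` can be absorbed:
there are `f' : X ⟶ Y'` in `C` and `g : Y ⟶ F(Y')` with `F(f') = e ≫ f ≫ g`. -/
def WeaklyAbsorbing {C : Type u₁} [Category.{v₁} C] {D : Type u₂} [Category.{v₂} D]
    (F : C ⥤ D) : Prop :=
  ∀ X : C, ∃ (Z : D) (e : F.obj X ⟶ Z),
    ∀ (Y : D) (f : Z ⟶ Y),
      ∃ (Y' : C) (f' : X ⟶ Y') (g : Y ⟶ F.obj Y'), F.map f' = e ≫ f ≫ g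

def CategoryTheory.Functor.IsAbsorbing {C : Type u₁} [Category.{v₁} C]
    {D : Type u₂} [Category.{v₂} D] (F : C ⥤ D) {X : C} {Z : D} (e : F.obj X ⟶ Z) : Prop :=
  ∀ ⦃Y : D⦄ (f : Z ⟶ Y), ∃ (Y' : C) (f' : X ⟶ Y') (g : Y ⟶ F.obj Y'), F.map f' = e ≫ f ≫ g

namespace IsAmalgamable

variable {C : Type u₁} [Category.{v₁} C]

theorem precomp {A₁ A₀ A : C} {i : A₀ ⟶ A} (hi : IsAmalgamable i) (u : A₁ ⟶ A₀) :
    IsAmalgamable (u ≫ i) := by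
  intro B X α₁ α₂
  obtain ⟨W, β₁, β₂, hβ⟩ := hi α₁ α₂
  exact ⟨W, β₁, β₂, by simp only [Category.assoc, hβ]⟩

theorem map_comp_of_isAbsorbing {D : Type u₂} [Category.{v₂} D] (F : C ⥤ D)
    {X₀ X : C} {i : X₀ ⟶ X} (hi : IsAmalgamable i) {Z : D} {e : F.obj X ⟶ Z}
    (he : F.IsAbsorbing e) : IsAmalgamable (F.map i ≫ e) := by
  intro B B' α₁ α₂
  obtain ⟨Y₁, f₁, g₁, h₁⟩ := he α₁
  obtain ⟨Y₂, f₂, g₂, h₂⟩ := he α₂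
  obtain ⟨W, β₁, β₂, hβ⟩ := hi f₁ f₂
  refine ⟨F.obj W, g₁ ≫ F.map β₁, g₂ ≫ F.map β₂, ?_⟩
  calc (F.map i ≫ e) ≫ α₁ ≫ g₁ ≫ F.map β₁ = F.map (i ≫ f₁ ≫ β₁) := by
        simp only [Functor.map_comp, Category.assoc, h₁]
    _ = F.map (i ≫ f₂ ≫ β₂) := by rw [hβ]
    _ = (F.map i ≫ e) ≫ α₂ ≫ g₂ ≫ F.map β₂ := by
        simp only [Functor.map_comp, Category.assoc, h₂]

end IsAmalgamable

/-- If `C` has the weak amalgamation property and `F : C ⥤ D` is cofinal and weakly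
absorbing, then `D` has the weak amalgamation property. -/
theorem stmt2 {C : Type u₁} [Category.{v₁} C] {D : Type u₂} [Category.{v₂} D]
    (F : C ⥤ D) (hC : HasWAP C) (hcof : Cofinal F) (habs : WeaklyAbsorbing F) :
    HasWAP D := by
  intro A₀
  obtain ⟨X₀, ⟨u⟩⟩ := hcof A₀
  obtain ⟨X, i, hi⟩ := hC X₀
  obtain ⟨Z, e, he⟩ := habs X
  exact ⟨Z, u ≫ F.map i ≫ e, (hi.map_comp_of_isAbsorbing F fun _ f => he _ f).precomp u⟩
end

section
/- Let E be a finite linearly ordered set with least element 0, let X be a finite set, and let d be an E-valued ultrametric on X. Then there exist a finite set Y ⊇ X and an E-valued ultrametric d' on Y extending d such that d' : Y × Y → E is surjective (i.e., the extension is precise and has the same distance set E). -/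
/-!
The distance set `E` is itself a precise ultrametric space under `(e, f) ↦ max e f` for
`e ≠ f`, since `e` is its distance to `⊥`. If `E = {⊥}`, then `X` has at most one point and
embeds into `E`. Otherwise place `X` and `E` at distance `max E ≠ ⊥` from each other;
a constant cross distance bounding both pieces never breaks the ultrametric inequality.
-/

/-- An `E`-valued ultrametric on `X`, where `E` is a linear order whose least element
`⊥` plays the role of `0`. -/
def IsUltrametric {X E : Type*} [LinearOrder E] [OrderBot E] (d : X → X → E) : Prop :=
  (∀ x y, d x y = ⊥ ↔ x = y) ∧ (∀ x y, d x y = d y x) ∧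
  (∀ x y z, d x z ≤ max (d x y) (d y z))

section MaxDist

variable {E : Type*} [LinearOrder E] [OrderBot E]

def maxDist (e f : E) : E := if e = f then ⊥ else max e f

theorem maxDist_bot_right (e : E) : maxDist e ⊥ = e := by
  unfold maxDist
  split_ifs with h <;> simp [h]

theorem isUltrametric_maxDist : IsUltrametric (maxDist : E → E → E) := by
  refine ⟨fun e f => ?_, fun e f => ?_, fun e f g => ?_⟩ <;> unfold maxDist
  · split_ifs <;> grind [max_eq_bot]
  · split_ifs <;> simp_all [max_comm]
  · split_ifs <;> grind

theorem maxDist_surjective : Function.Surjective (fun p : E × E => maxDist p.1 p.2) :=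
  fun e => ⟨(e, ⊥), maxDist_bot_right e⟩

end MaxDist

section SumDist

variable {X Y E : Type*} [LinearOrder E] [OrderBot E]

def sumDist (d₁ : X → X → E) (d₂ : Y → Y → E) (c : E) : X ⊕ Y → X ⊕ Y → E
  | .inl x, .inl x' => d₁ x x'
  | .inr y, .inr y' => d₂ y y'
  | .inl _, .inr _ => c
  | .inr _, .inl _ => c

theorem IsUltrametric.sumDist {d₁ : X → X → E} {d₂ : Y → Y → E} {c : E}
    (h₁ : IsUltrametric d₁) (h₂ : IsUltrametric d₂) (hc : c ≠ ⊥)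
    (hc₁ : ∀ x x', d₁ x x' ≤ c) (hc₂ : ∀ y y', d₂ y y' ≤ c) :
    IsUltrametric (sumDist d₁ d₂ c) := by
  refine ⟨?_, ?_, ?_⟩
  · rintro (x | y) (x' | y') <;> simp [_root_.sumDist, h₁.1, h₂.1, hc]
  · rintro (x | y) (x' | y') <;> simp [_root_.sumDist, h₁.2.1, h₂.2.1]
  · rintro (x | y) (x' | y') (x'' | y'') <;>
      simp only [_root_.sumDist, le_max_left, le_max_right]
    · exact h₁.2.2 x x' x''
    · exact le_max_of_le_left (hc₁ x x'')
    · exact le_max_of_le_left (hc₂ y y'')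
    · exact h₂.2.2 y y' y''

end SumDist

/-- Every finite `E`-valued ultrametric space (`E` a finite distance set) extends to a
finite precise `E`-valued ultrametric space with the same distance set: all distances
in `E` are attained. -/
theorem stmt3 {E : Type} [LinearOrder E] [OrderBot E] [Fintype E]
    {X : Type} [Fintype X] (d : X → X → E) (hd : IsUltrametric d) :
    ∃ (Y : Type) (_ : Fintype Y) (ι : X ↪ Y) (d' : Y → Y → E),
      IsUltrametric d' ∧ (∀ x x', d' (ι x) (ι x') = d x x') ∧
      Function.Surjective (fun p : Y × Y => d' p.1 p.2) := by
  rcases subsingleton_or_nontrivial E with hE | hE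
  · have hX : Subsingleton X := ⟨fun x x' => (hd.1 x x').1 (Subsingleton.elim _ _)⟩
    exact ⟨E, inferInstance, ⟨fun _ => ⊥, fun x x' _ => Subsingleton.elim x x'⟩, maxDist,
      isUltrametric_maxDist, fun _ _ => Subsingleton.elim _ _, maxDist_surjective⟩
  · obtain ⟨m, hm⟩ := Finite.exists_max (id : E → E)
    obtain ⟨e, he⟩ := exists_ne (⊥ : E)
    have hm_ne_bot : m ≠ ⊥ := ne_bot_of_le_ne_bot he (hm e)
    refine ⟨X ⊕ E, inferInstance, Function.Embedding.inl, sumDist d maxDist m,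
      hd.sumDist isUltrametric_maxDist hm_ne_bot (fun _ _ => hm _) (fun _ _ => hm _),
      fun _ _ => rfl, fun f => ?_⟩
    obtain ⟨⟨e₁, e₂⟩, h⟩ := maxDist_surjective f
    exact ⟨(.inr e₁, .inr e₂), h⟩
end

section
/- Let E be a linearly ordered set with least element 0 containing at least one positive element, let X be a finite set, and let a ≠ b be two points not in X. Suppose d is a function defined on pairs from X ∪ {a} and on pairs from X ∪ {b} (agreeing on pairs from X) such that d restricts to an E-valued ultrametric on X ∪ {a} and to an E-valued ultrametric on X ∪ {b}. Then there exists r ∈ E with r > 0 such that setting d(a,b) = d(b,a) = r makes d an E-valued ultrametric on X ∪ {a,b}. Moreover, if d(a,x₀) ≠ d(b,x₀) for some x₀ ∈ X, then such r is unique (namely r = max(d(a,x₀), d(b,x₀))). -/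
/-!
Every triangle of `X ∪ {a, b}` avoiding `a` or `b` already lies in one of the given ultrametric
spaces, so a value `r` for `d(a,b)` works exactly when each triangle `a, b, t` with `t ∈ X` is
ultrametric, i.e. the largest of `r, d(a,t), d(b,t)` is attained twice. For `X` nonempty, take
`r = max (d a w) (d b w)` with `w ∈ X` minimizing this quantity: routing through `w` gives
`d(a,t) ≤ max (d(a,w), d(w,b), d(b,t))`, and symmetrically. If `d(a,x₀) ≠ d(b,x₀)`, the triangle
`a, b, x₀` is isosceles only when `r` is the larger of the two.
-/

/-- `d` restricts to an `E`-valued ultrametric on the set `s ⊆ Y`, where the least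
element `⊥` of `E` plays the role of `0`. -/
def IsUltrametricOn {Y E : Type*} [LinearOrder E] [OrderBot E]
    (d : Y → Y → E) (s : Set Y) : Prop :=
  (∀ x ∈ s, ∀ y ∈ s, (d x y = ⊥ ↔ x = y)) ∧
  (∀ x ∈ s, ∀ y ∈ s, d x y = d y x) ∧
  (∀ x ∈ s, ∀ y ∈ s, ∀ z ∈ s, d x z ≤ max (d x y) (d y z))

section Triangle

variable {E : Type*} [LinearOrder E] {p q r : E}

def IsUltrametricTriangle (p q r : E) : Prop :=
  p ≤ max q r ∧ q ≤ max p r ∧ r ≤ max p q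

theorem IsUltrametricTriangle.swap_left (h : IsUltrametricTriangle p q r) :
    IsUltrametricTriangle q p r :=
  ⟨h.2.1, h.1, max_comm p q ▸ h.2.2⟩

theorem IsUltrametricTriangle.rotate (h : IsUltrametricTriangle p q r) :
    IsUltrametricTriangle q r p :=
  ⟨max_comm p r ▸ h.2.1, max_comm p q ▸ h.2.2, h.1⟩

theorem isUltrametricTriangle_bot_self [OrderBot E] : IsUltrametricTriangle ⊥ q q :=
  ⟨bot_le, le_max_right _ _, le_max_right _ _⟩

theorem IsUltrametricTriangle.eq_max_of_ne (h : IsUltrametricTriangle r p q) (hpq : p ≠ q) :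
    r = max p q := by
  refine le_antisymm h.1 ?_
  rcases hpq.lt_or_gt with hlt | hlt
  · rw [max_eq_right hlt.le]
    exact (le_max_iff.mp h.2.2).resolve_right hlt.not_ge
  · rw [max_eq_left hlt.le]
    exact (le_max_iff.mp h.2.1).resolve_right hlt.not_ge

end Triangle

namespace IsUltrametricOn

variable {Y E : Type*} [LinearOrder E] [OrderBot E] {d d' : Y → Y → E} {s X : Set Y} {a b x y z : Y}

theorem congr (h : IsUltrametricOn d s) (hd : ∀ x ∈ s, ∀ y ∈ s, d' x y = d x y) :
    IsUltrametricOn d' s := by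
  obtain ⟨h0, hsymm, htri⟩ := h
  refine ⟨fun x hx y hy => ?_, fun x hx y hy => ?_, fun x hx y hy z hz => ?_⟩
  · rw [hd x hx y hy]
    exact h0 x hx y hy
  · rw [hd x hx y hy, hd y hy x hx]
    exact hsymm x hx y hy
  · rw [hd x hx z hz, hd x hx y hy, hd y hy z hz]
    exact htri x hx y hy z hz

theorem isUltrametricTriangle (h : IsUltrametricOn d s) (hx : x ∈ s) (hy : y ∈ s) (hz : z ∈ s) :
    IsUltrametricTriangle (d x y) (d x z) (d y z) := by
  obtain ⟨-, hsymm, htri⟩ := h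
  refine ⟨?_, htri x hx y hy z hz, ?_⟩
  · rw [hsymm y hy z hz]
    exact htri x hx z hz y hy
  · rw [hsymm x hx y hy]
    exact htri y hy x hx z hz

protected theorem insert (hs : IsUltrametricOn d s) (hbb : d b b = ⊥)
    (hbot : ∀ x ∈ s, d x b = ⊥ ↔ x = b) (hsymm : ∀ x ∈ s, d x b = d b x)
    (htri : ∀ x ∈ s, ∀ y ∈ s, IsUltrametricTriangle (d x y) (d x b) (d y b)) :
    IsUltrametricOn d (insert b s) := by
  obtain ⟨hs0, hssymm, hstri⟩ := hs
  refine ⟨?_, ?_, ?_⟩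
  · rintro x (rfl | hx) y (rfl | hy)
    · simp [hbb]
    · rw [← hsymm y hy, hbot y hy, eq_comm]
    · exact hbot x hx
    · exact hs0 x hx y hy
  · rintro x (rfl | hx) y (rfl | hy)
    · rfl
    · exact (hsymm y hy).symm
    · exact hsymm x hx
    · exact hssymm x hx y hy
  · rintro x (rfl | hx) y (rfl | hy) z (rfl | hz)
    · exact hbb ▸ bot_le
    · exact le_max_right _ _
    · exact hbb ▸ bot_le
    · rw [← hsymm z hz, ← hsymm y hy, max_comm]
      exact (htri y hy z hz).2.2
    · exact le_max_left _ _
    · rw [← hsymm z hz]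
      exact (htri x hx z hz).1
    · exact (htri x hx y hy).2.1
    · exact hstri x hx y hy z hz

theorem union_pair (h1 : IsUltrametricOn d (X ∪ {a})) (h2 : IsUltrametricOn d (X ∪ {b}))
    (hab : a ≠ b) (hdab : d a b ≠ ⊥) (hsymm : d a b = d b a)
    (htri : ∀ t ∈ X, IsUltrametricTriangle (d a b) (d a t) (d b t)) :
    IsUltrametricOn d (X ∪ {a, b}) := by
  have hb : b ∈ X ∪ {b} := .inr rfl
  have hmem : ∀ {x}, x ∈ X → x ∈ X ∪ {b} := .inl
  have haa : d a a = ⊥ := (h1.1 a (.inr rfl) a (.inr rfl)).2 rfl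
  have hda : ∀ t ∈ X, d t a = d a t := fun t ht => h1.2.1 t (.inl ht) a (.inr rfl)
  have hdb : ∀ t ∈ X, d t b = d b t := fun t ht => h2.2.1 t (hmem ht) b hb
  rw [show X ∪ {a, b} = insert b (X ∪ {a}) by ext; simp [or_left_comm]]
  refine h1.insert ((h2.1 b hb b hb).2 rfl) ?_ ?_ ?_
  · rintro x (hx | rfl)
    · exact h2.1 x (hmem hx) b hb
    · exact iff_of_false hdab hab
  · rintro x (hx | rfl)
    · exact hdb x hx
    · exact hsymm
  · rintro x (hx | rfl) y (hy | rfl)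
    · exact h2.isUltrametricTriangle (hmem hx) (hmem hy) hb
    · rw [hda x hx, hdb x hx]
      exact (htri x hx).rotate
    · rw [hdb y hy]
      exact (htri y hy).swap_left
    · rw [haa]
      exact isUltrametricTriangle_bot_self

end IsUltrametricOn

section Amalgamation

variable {Y E : Type*} [DecidableEq Y]

def joinDist (d : Y → Y → E) (a b : Y) (r : E) : Y → Y → E :=
  fun x y => if (x = a ∧ y = b) ∨ (x = b ∧ y = a) then r else d x y

variable {d : Y → Y → E} {a b x y : Y} {r : E}

@[simp]
theorem joinDist_left_right : joinDist d a b r a b = r := if_pos (.inl ⟨rfl, rfl⟩)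

@[simp]
theorem joinDist_right_left : joinDist d a b r b a = r := if_pos (.inr ⟨rfl, rfl⟩)

theorem joinDist_of_ne_right (hx : x ≠ b) (hy : y ≠ b) : joinDist d a b r x y = d x y :=
  if_neg (by tauto)

theorem joinDist_of_ne_left (hx : x ≠ a) (hy : y ≠ a) : joinDist d a b r x y = d x y :=
  if_neg (by tauto)

variable [LinearOrder E] [OrderBot E] {X : Set Y}

theorem isUltrametricOn_joinDist (hab : a ≠ b) (ha : a ∉ X) (hb : b ∉ X)
    (h1 : IsUltrametricOn d (X ∪ {a})) (h2 : IsUltrametricOn d (X ∪ {b})) (hr : ⊥ < r)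
    (htri : ∀ t ∈ X, IsUltrametricTriangle r (d a t) (d b t)) :
    IsUltrametricOn (joinDist d a b r) (X ∪ {a, b}) := by
  have hneb : ∀ x ∈ X ∪ {a}, x ≠ b := by
    rintro x (hx | rfl) rfl
    exacts [hb hx, hab rfl]
  have hnea : ∀ x ∈ X ∪ {b}, x ≠ a := by
    rintro x (hx | rfl) rfl
    exacts [ha hx, hab rfl]
  refine (h1.congr fun x hx y hy => joinDist_of_ne_right (hneb x hx) (hneb y hy)).union_pair
    (h2.congr fun x hx y hy => joinDist_of_ne_left (hnea x hx) (hnea y hy)) hab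
    (by simpa using hr.ne') (by simp) fun t ht => ?_
  rw [joinDist_left_right, joinDist_of_ne_right hab (hneb t (.inl ht)),
    joinDist_of_ne_left hab.symm (hnea t (.inl ht))]
  exact htri t ht

theorem eq_max_of_isUltrametricOn_joinDist (hab : a ≠ b) (ha : a ∉ X) (hb : b ∉ X) {x₀ : Y}
    (hx₀ : x₀ ∈ X) (hne : d a x₀ ≠ d b x₀)
    (hD : IsUltrametricOn (joinDist d a b r) (X ∪ {a, b})) :
    r = max (d a x₀) (d b x₀) := by
  have htri := hD.isUltrametricTriangle (x := a) (y := b) (by simp) (by simp) (.inl hx₀)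
  rw [joinDist_left_right, joinDist_of_ne_right hab (ne_of_mem_of_not_mem hx₀ hb),
    joinDist_of_ne_left hab.symm (ne_of_mem_of_not_mem hx₀ ha)] at htri
  exact htri.eq_max_of_ne hne

end Amalgamation

section Existence

variable {Y E : Type*} [LinearOrder E] [OrderBot E] {d : Y → Y → E} {X : Set Y} {a b : Y}

theorem le_max_of_isUltrametricOn_union_singleton (h1 : IsUltrametricOn d (X ∪ {a}))
    (h2 : IsUltrametricOn d (X ∪ {b})) {w t : Y} (hw : w ∈ X) (ht : t ∈ X) :
    d a t ≤ max (max (d a w) (d b w)) (d b t) :=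
  calc d a t ≤ max (d a w) (d w t) := h1.2.2 a (.inr rfl) w (.inl hw) t (.inl ht)
    _ ≤ max (d a w) (max (d w b) (d b t)) :=
      max_le_max le_rfl (h2.2.2 w (.inl hw) b (.inr rfl) t (.inl ht))
    _ = max (max (d a w) (d b w)) (d b t) := by rw [h2.2.1 w (.inl hw) b (.inr rfl), max_assoc]

theorem exists_forall_isUltrametricTriangle (hpos : ∃ r : E, ⊥ < r) (hX : X.Finite)
    (ha : a ∉ X) (h1 : IsUltrametricOn d (X ∪ {a})) (h2 : IsUltrametricOn d (X ∪ {b})) :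
    ∃ r, ⊥ < r ∧ ∀ t ∈ X, IsUltrametricTriangle r (d a t) (d b t) := by
  rcases X.eq_empty_or_nonempty with rfl | hXne
  · obtain ⟨r, hr⟩ := hpos
    exact ⟨r, hr, by simp⟩
  obtain ⟨w, hw, hmin⟩ := X.exists_min_image (fun t => max (d a t) (d b t)) hX hXne
  have hdaw : ⊥ < d a w :=
    bot_lt_iff_ne_bot.2 fun h => ha ((h1.1 a (.inr rfl) w (.inl hw)).1 h ▸ hw)
  refine ⟨_, hdaw.trans_le (le_max_left _ _), fun t ht => ⟨hmin t ht, ?_, ?_⟩⟩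
  · exact le_max_of_isUltrametricOn_union_singleton h1 h2 hw ht
  · rw [max_comm (d a w)]
    exact le_max_of_isUltrametricOn_union_singleton h2 h1 hw ht

end Existence

/-- Strong amalgamation of two one-point extensions `X ∪ {a}` and `X ∪ {b}` of a finite
`E`-valued ultrametric space `X`: some positive value `r` for `d(a,b)` makes
`X ∪ {a,b}` an ultrametric space; and if the two extensions are non-isomorphic, as
witnessed by `x₀ ∈ X` with `d(a,x₀) ≠ d(b,x₀)`, then such `r` is unique, namely
`r = max (d a x₀) (d b x₀)`. -/
theorem stmt4 {Y E : Type*} [DecidableEq Y] [LinearOrder E] [OrderBot E]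
    (hpos : ∃ r : E, ⊥ < r)
    (X : Set Y) (hXfin : X.Finite)
    (a b : Y) (hab : a ≠ b) (ha : a ∉ X) (hb : b ∉ X)
    (d : Y → Y → E)
    (h1 : IsUltrametricOn d (X ∪ {a}))
    (h2 : IsUltrametricOn d (X ∪ {b})) :
    (∃ r : E, ⊥ < r ∧
      IsUltrametricOn
        (fun x y => if (x = a ∧ y = b) ∨ (x = b ∧ y = a) then r else d x y)
        (X ∪ {a, b})) ∧
    (∀ x₀ ∈ X, d a x₀ ≠ d b x₀ →
      ∀ r : E, ⊥ < r →
        IsUltrametricOn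
          (fun x y => if (x = a ∧ y = b) ∨ (x = b ∧ y = a) then r else d x y)
          (X ∪ {a, b}) →
        r = max (d a x₀) (d b x₀)) := by
  obtain ⟨r, hr, htri⟩ := exists_forall_isUltrametricTriangle hpos hXfin ha h1 h2
  exact ⟨⟨r, hr, isUltrametricOn_joinDist hab ha hb h1 h2 hr htri⟩,
    fun x₀ hx₀ hne r _ hD => eq_max_of_isUltrametricOn_joinDist hab ha hb hx₀ hne hD⟩
end

section
/- Let (X, d_X) be an E_X-valued ultrametric space, (Y, d_Y) an E_Y-valued ultrametric space, and (f, φ) a dc-embedding from X to Y. Then f is uniformly continuous (for every ε ∈ E_Y with ε > 0 there is δ ∈ E_X with δ > 0 such that d_X(x,x') < δ implies d_Y(f(x),f(x')) < ε) if and only if φ is continuous at 0 (for every ε ∈ E_Y with ε > 0 there is δ ∈ E_X with δ > 0 such that φ(δ) ≤ ε) or X is uniformly discrete (there is δ ∈ E_X with δ > 0 such that d_X(x,x') ≥ δ for all x ≠ x'). -/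
/-!
If `φ` is continuous at `⊥`, uniform continuity of `f` is inherited from the strict
monotonicity of `φ`; if `X` is uniformly discrete, a small enough `δ` only sees the pairs
`x = x'`. Conversely, if `φ` is not continuous at `⊥`, some `ε > ⊥` lies strictly below
`φ δ` for every `δ > ⊥`, so the `δ` that uniform continuity provides for this `ε` separates
all pairs of distinct points.
-/

namespace OrderValuedDist

variable {X Y EX EY : Type*} [LinearOrder EX] [OrderBot EX] [LinearOrder EY] [OrderBot EY]

def UniformContinuous (dX : X → X → EX) (dY : Y → Y → EY) (f : X → Y) : Prop :=
  ∀ ε : EY, ⊥ < ε → ∃ δ : EX, ⊥ < δ ∧ ∀ x x' : X, dX x x' < δ → dY (f x) (f x') < ε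

def ContinuousAtBot (φ : EX → EY) : Prop :=
  ∀ ε : EY, ⊥ < ε → ∃ δ : EX, ⊥ < δ ∧ φ δ ≤ ε

def UniformlyDiscrete (dX : X → X → EX) : Prop :=
  ∃ δ : EX, ⊥ < δ ∧ ∀ x x' : X, x ≠ x' → δ ≤ dX x x'

variable {dX : X → X → EX} {dY : Y → Y → EY} {f : X → Y} {φ : EX → EY}

theorem uniformContinuous_of_continuousAtBot (hφ : StrictMono φ)
    (hcompat : ∀ x x' : X, dY (f x) (f x') = φ (dX x x')) (hcont : ContinuousAtBot φ) :
    UniformContinuous dX dY f := by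
  intro ε hε
  obtain ⟨δ, hδ, hφδ⟩ := hcont ε hε
  refine ⟨δ, hδ, fun x x' hxx' => ?_⟩
  rw [hcompat]
  exact (hφ hxx').trans_le hφδ

theorem uniformContinuous_of_uniformlyDiscrete (hdX : ∀ x : X, dX x x = ⊥) (hφ0 : φ ⊥ = ⊥)
    (hcompat : ∀ x x' : X, dY (f x) (f x') = φ (dX x x')) (hdisc : UniformlyDiscrete dX) :
    UniformContinuous dX dY f := by
  intro ε hε
  obtain ⟨δ, hδ, hsep⟩ := hdisc
  refine ⟨δ, hδ, fun x x' hxx' => ?_⟩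
  obtain rfl : x = x' := by_contra fun hne => (hsep x x' hne).not_gt hxx'
  rwa [hcompat, hdX, hφ0]

theorem uniformlyDiscrete_of_not_continuousAtBot (hdX : ∀ x x' : X, dX x x' = ⊥ → x = x')
    (hcompat : ∀ x x' : X, dY (f x) (f x') = φ (dX x x')) (hf : UniformContinuous dX dY f)
    (hcont : ¬ContinuousAtBot φ) : UniformlyDiscrete dX := by
  simp only [ContinuousAtBot, not_forall, not_exists, not_and, not_le] at hcont
  obtain ⟨ε, hε, hεφ⟩ := hcont
  obtain ⟨δ, hδ, hfδ⟩ := hf ε hε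
  refine ⟨δ, hδ, fun x x' hne => not_lt.1 fun hlt => ?_⟩
  have hpos : ⊥ < dX x x' := bot_lt_iff_ne_bot.2 fun h => hne (hdX x x' h)
  exact (hεφ _ hpos).not_gt (hcompat x x' ▸ hfδ x x' hlt)

theorem uniformContinuous_iff (hdX : ∀ x x' : X, dX x x' = ⊥ ↔ x = x') (hφ : StrictMono φ)
    (hφ0 : φ ⊥ = ⊥) (hcompat : ∀ x x' : X, dY (f x) (f x') = φ (dX x x')) :
    UniformContinuous dX dY f ↔ ContinuousAtBot φ ∨ UniformlyDiscrete dX := by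
  refine ⟨fun hf => ?_, fun h => h.elim (uniformContinuous_of_continuousAtBot hφ hcompat)
    (uniformContinuous_of_uniformlyDiscrete (fun x => (hdX x x).2 rfl) hφ0 hcompat)⟩
  by_cases hcont : ContinuousAtBot φ
  · exact .inl hcont
  · exact .inr (uniformlyDiscrete_of_not_continuousAtBot (fun x x' => (hdX x x').1) hcompat hf
      hcont)

end OrderValuedDist

theorem stmt5_general {X Y EX EY : Type*} [LinearOrder EX] [OrderBot EX]
    [LinearOrder EY] [OrderBot EY]
    (dX : X → X → EX) (dY : Y → Y → EY)
    (hdX : IsUltrametric dX)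
    (f : X → Y)
    (φ : EX ↪o EY) (hφ0 : φ ⊥ = ⊥)
    (hcompat : ∀ x x' : X, dY (f x) (f x') = φ (dX x x')) :
    (∀ ε : EY, ⊥ < ε → ∃ δ : EX, ⊥ < δ ∧
        ∀ x x' : X, dX x x' < δ → dY (f x) (f x') < ε) ↔
    ((∀ ε : EY, ⊥ < ε → ∃ δ : EX, ⊥ < δ ∧ φ δ ≤ ε) ∨
      (∃ δ : EX, ⊥ < δ ∧ ∀ x x' : X, x ≠ x' → δ ≤ dX x x')) :=
  OrderValuedDist.uniformContinuous_iff hdX.1 φ.strictMono hφ0 hcompat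

/-- A dc-embedding `(f, φ)` between ultrametric spaces is uniformly continuous if and
only if the distance part `φ` is continuous at `0`, or the source space is uniformly
discrete. -/
theorem stmt5 {X Y EX EY : Type*} [LinearOrder EX] [OrderBot EX]
    [LinearOrder EY] [OrderBot EY]
    (dX : X → X → EX) (dY : Y → Y → EY)
    (hdX : IsUltrametric dX) (hdY : IsUltrametric dY)
    (f : X → Y) (hf : Function.Injective f)
    (φ : EX ↪o EY) (hφ0 : φ ⊥ = ⊥)
    (hcompat : ∀ x x' : X, dY (f x) (f x') = φ (dX x x')) :
    (∀ ε : EY, ⊥ < ε → ∃ δ : EX, ⊥ < δ ∧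
        ∀ x x' : X, dX x x' < δ → dY (f x) (f x') < ε) ↔
    ((∀ ε : EY, ⊥ < ε → ∃ δ : EX, ⊥ < δ ∧ φ δ ≤ ε) ∨
      (∃ δ : EX, ⊥ < δ ∧ ∀ x x' : X, x ≠ x' → δ ≤ dX x x')) :=
  stmt5_general dX dY hdX f φ hφ0 hcompat
end

section
/- Let S and T be adjacency trees and let f : S → T be a map such that s ≤ s' implies f(s) ≤ f(s') and s ∼ s' implies f(s) ∼ f(s'). Then f also reflects order and adjacency: f(s) ≤ f(s') implies s ≤ s', and f(s) ∼ f(s') implies s ∼ s'. (In particular f is injective.) -/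
/-!
A neighbour `u ∼ b` of `b` lies above everything strictly below `b`, yet is incomparable
with `b`; hence `a < b` forces `f a ≠ f b`, so `f` is strictly monotone. If `a ≰ b` and
`f a ≤ f b`, then either `b < a`, contradicting strict monotonicity, or `a, b` have an
adjacency envelope `e ∼ e'`, whose images are adjacent but both lie below `f b`, which is
impossible in a tree. So `f` is an order embedding, and an order embedding reflects the
equality of strict lower cones.
-/

/-- The adjacency relation on a partially ordered set:
`t ∼ t'` iff `t ≠ t'` and `t, t'` have the same strict lower cones. -/
def TreeAdj {T : Type*} [PartialOrder T] (t t' : T) : Prop :=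
  t ≠ t' ∧ ∀ s : T, s < t ↔ s < t'

/-- An adjacency tree: a tree (down-sets are linearly ordered) in which every element
has an adjacent element, and every two incomparable elements have an adjacency
envelope. -/
def IsAdjacencyTree (T : Type*) [PartialOrder T] : Prop :=
  (∀ x y t : T, x ≤ t → y ≤ t → x ≤ y ∨ y ≤ x) ∧
  (∀ t : T, ∃ t' : T, TreeAdj t t') ∧
  (∀ t t' : T, ¬ t ≤ t' → ¬ t' ≤ t →
    ∃ e e' : T, e ≤ t ∧ e' ≤ t' ∧ TreeAdj e e')

namespace TreeAdj

variable {T : Type*} [PartialOrder T] {e e' t : T}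

theorem symm (h : TreeAdj e e') : TreeAdj e' e :=
  ⟨h.1.symm, fun s => (h.2 s).symm⟩

theorem not_le (h : TreeAdj e e') : ¬ e ≤ e' :=
  fun hle => lt_irrefl e ((h.2 e).2 (lt_of_le_of_ne hle h.1))

theorem not_le_of_le (htree : ∀ x y t : T, x ≤ t → y ≤ t → x ≤ y ∨ y ≤ x)
    (h : TreeAdj e e') (he : e ≤ t) : ¬ e' ≤ t :=
  fun he' => (htree e e' t he he').elim h.not_le h.symm.not_le

theorem of_orderEmbedding {S : Type*} [PartialOrder S] (f : S ↪o T) {s s' : S}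
    (h : TreeAdj (f s) (f s')) : TreeAdj s s' :=
  ⟨fun hss => h.1 (congrArg f hss), fun u => by simpa only [f.lt_iff_lt] using h.2 (f u)⟩

end TreeAdj

section MapsOfAdjacencyTrees

variable {S T : Type*} [PartialOrder S] [PartialOrder T] {f : S → T}

theorem strictMono_of_map_treeAdj (hneighbour : ∀ s : S, ∃ s', TreeAdj s s')
    (hf : Monotone f) (hadj : ∀ s s', TreeAdj s s' → TreeAdj (f s) (f s')) : StrictMono f := by
  intro a b hab
  refine lt_of_le_of_ne (hf hab.le) fun hfab => ?_
  obtain ⟨u, hbu⟩ := hneighbour b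
  have hau : a < u := (hbu.2 a).1 hab
  exact (hadj b u hbu).not_le (hfab ▸ hf hau.le)

theorem le_of_map_le_of_map_treeAdj (hS : IsAdjacencyTree S)
    (htree : ∀ x y t : T, x ≤ t → y ≤ t → x ≤ y ∨ y ≤ x)
    (hf : Monotone f) (hadj : ∀ s s', TreeAdj s s' → TreeAdj (f s) (f s')) {a b : S}
    (h : f a ≤ f b) : a ≤ b := by
  by_contra hab
  by_cases hba : b ≤ a
  · exact (strictMono_of_map_treeAdj hS.2.1 hf hadj (lt_of_le_not_ge hba hab)).not_ge h
  · obtain ⟨e, e', he, he', hee'⟩ := hS.2.2 a b hab hba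
    exact (hadj e e' hee').not_le_of_le htree ((hf he).trans h) (hf he')

end MapsOfAdjacencyTrees

/-- A map between adjacency trees that preserves order and adjacency automatically
reflects order and adjacency (and in particular is injective). -/
theorem stmt6 {S T : Type*} [PartialOrder S] [PartialOrder T]
    (hS : IsAdjacencyTree S) (hT : IsAdjacencyTree T) (f : S → T)
    (hmono : ∀ s s' : S, s ≤ s' → f s ≤ f s')
    (hadj : ∀ s s' : S, TreeAdj s s' → TreeAdj (f s) (f s')) :
    (∀ s s' : S, f s ≤ f s' → s ≤ s') ∧
    (∀ s s' : S, TreeAdj (f s) (f s') → TreeAdj s s') ∧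
    Function.Injective f := by
  have hle : ∀ s s', f s ≤ f s' ↔ s ≤ s' := fun _ _ =>
    ⟨le_of_map_le_of_map_treeAdj hS hT.1 (fun _ _ => hmono _ _) hadj, hmono _ _⟩
  let g : S ↪o T := OrderEmbedding.ofMapLEIff f hle
  exact ⟨fun s s' => (hle s s').1, fun _ _ => TreeAdj.of_orderEmbedding g, g.injective⟩
end

section
/- Let (X, d_X) be an E_X-valued ultrametric space, (Y, d_Y) an E_Y-valued ultrametric space, and (f, φ) a dc-embedding from X to Y. Assume Y is precise (d_Y : Y × Y → E_Y is surjective) and that the image f[X] is dense in Y, i.e., for every y ∈ Y and every r ∈ E_Y with r > 0 there is x ∈ X with d_Y(f(x), y) < r. Then φ : E_X → E_Y is surjective, and hence an order isomorphism of E_X onto E_Y. -/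
/-!
Every ultrametric triangle is isosceles with a short base. Given a nonzero distance
`e = d_Y(y₁, y₂)`, density provides `x₁, x₂` with `f x₁` and `f x₂` closer than `e` to
`y₁` and `y₂`; moving the endpoints of a segment by less than its length does not change
its length, so `φ (d_X(x₁, x₂)) = d_Y(f x₁, f x₂) = e`.
-/

namespace IsUltrametric

variable {X E : Type*} [LinearOrder E] [OrderBot E] {d : X → X → E}

theorem dist_comm (hd : IsUltrametric d) (x y : X) : d x y = d y x := hd.2.1 x y

theorem dist_eq_of_dist_lt (hd : IsUltrametric d) {x x' y : X} (h : d x x' < d x y) :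
    d x' y = d x y := by
  have htri := hd.2.2
  apply le_antisymm
  · calc d x' y ≤ max (d x' x) (d x y) := htri x' x y
      _ = d x y := max_eq_right (hd.dist_comm x' x ▸ h.le)
  · by_contra! hlt
    exact (htri x x' y).not_gt (max_lt h hlt)

theorem dist_eq_of_lt_of_lt (hd : IsUltrametric d) {a b y y' : X}
    (ha : d a y < d y y') (hb : d b y' < d y y') : d a b = d y y' := by
  have hay' : d a y' = d y y' := hd.dist_eq_of_dist_lt (hd.dist_comm a y ▸ ha)
  have hb' : d y' b < d y' a := by rwa [hd.dist_comm y' b, hd.dist_comm y' a, hay']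
  calc d a b = d b a := hd.dist_comm a b
    _ = d y' a := hd.dist_eq_of_dist_lt hb'
    _ = d a y' := hd.dist_comm y' a
    _ = d y y' := hay'

end IsUltrametric

theorem stmt7_general {X Y EX EY : Type*} [LinearOrder EX] [OrderBot EX]
    [LinearOrder EY] [OrderBot EY]
    (dX : X → X → EX) (dY : Y → Y → EY)
    (hdY : IsUltrametric dY)
    (f : X → Y)
    (φ : EX ↪o EY) (hφ0 : φ ⊥ = ⊥)
    (hcompat : ∀ x x' : X, dY (f x) (f x') = φ (dX x x'))
    (hprecise : Function.Surjective (fun p : Y × Y => dY p.1 p.2))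
    (hdense : ∀ (y : Y) (r : EY), ⊥ < r → ∃ x : X, dY (f x) y < r) :
    Function.Surjective ⇑φ ∧ ∃ ψ : EX ≃o EY, ∀ r : EX, ψ r = φ r := by
  have hsurj : Function.Surjective ⇑φ := by
    intro e
    rcases eq_bot_or_bot_lt e with rfl | he
    · exact ⟨⊥, hφ0⟩
    obtain ⟨⟨y₁, y₂⟩, rfl⟩ := hprecise e
    obtain ⟨x₁, hx₁⟩ := hdense y₁ _ he
    obtain ⟨x₂, hx₂⟩ := hdense y₂ _ he
    exact ⟨dX x₁ x₂, (hcompat x₁ x₂).symm.trans (hdY.dist_eq_of_lt_of_lt hx₁ hx₂)⟩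
  exact ⟨hsurj, OrderIso.ofSurjective φ hsurj, fun _ => rfl⟩

/-- If `(f, φ)` is a dc-embedding into a precise ultrametric space `Y` with dense image,
then the distance part `φ` is surjective, and hence an order isomorphism of the
distance sets. -/
theorem stmt7 {X Y EX EY : Type*} [LinearOrder EX] [OrderBot EX]
    [LinearOrder EY] [OrderBot EY]
    (dX : X → X → EX) (dY : Y → Y → EY)
    (hdX : IsUltrametric dX) (hdY : IsUltrametric dY)
    (f : X → Y) (hf : Function.Injective f)
    (φ : EX ↪o EY) (hφ0 : φ ⊥ = ⊥)
    (hcompat : ∀ x x' : X, dY (f x) (f x') = φ (dX x x'))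
    (hprecise : Function.Surjective (fun p : Y × Y => dY p.1 p.2))
    (hdense : ∀ (y : Y) (r : EY), ⊥ < r → ∃ x : X, dY (f x) y < r) :
    Function.Surjective ⇑φ ∧ ∃ ψ : EX ≃o EY, ∀ r : EX, ψ r = φ r :=
  stmt7_general dX dY hdY f φ hφ0 hcompat hprecise hdense
end

section
/- Let S be an infinite set with a distinguished element 0 ∈ S. For every finite subset A ⊆ V_S and every function ρ : A → ℚ^{>0} such that for all a, a' ∈ A one has ρ(a) ≤ max(d(a,a'), ρ(a')) and d(a,a') ≤ max(ρ(a), ρ(a')), there exists v ∈ V_S with d(v, a) = ρ(a) for every a ∈ A. (That is, V_S realizes every one-point ℚ^{≥0}-valued ultrametric extension of each of its finite subspaces.) -/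
/-!
Let `a₀ ∈ A` minimise `ρ` and put `m = ρ a₀`. The compatibility inequalities say that every
`a ∈ A` with `ρ a = m` agrees with `a₀` strictly above `m`, while every `a` with `ρ a > m`
satisfies `d(a, a₀) = ρ a`. So take `v` equal to `a₀` strictly above `m`, equal at `m` to a
value of `S` that no `a ∈ A` takes there (possible as `S` is infinite), and `0` below `m`.
-/

open scoped NNRat

noncomputable section

/-- The positive rationals, as a subtype of `ℚ≥0`. -/
abbrev Qpos : Type := {q : ℚ≥0 // 0 < q}

/-- The support of `f : Qpos → S` relative to the distinguished element `s₀`. -/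
def VSupp {S : Type*} (s₀ : S) (f : Qpos → S) : Set Qpos := {r | f r ≠ s₀}

/-- `V_S`: functions `ℚ^{>0} → S` with finite support. -/
def VS (S : Type*) (s₀ : S) : Type _ := {f : Qpos → S // (VSupp s₀ f).Finite}

open Classical in
/-- The `ℚ≥0`-valued ultrametric: the greatest coordinate at which `f` and `g`
differ, and `0` if there is none (in particular `qdist f f = 0`). -/
def qdist {S : Type*} (f g : Qpos → S) : ℚ≥0 :=
  if h : ∃ m : ℚ≥0, IsGreatest {r : ℚ≥0 | ∃ hr : 0 < r, f ⟨r, hr⟩ ≠ g ⟨r, hr⟩} m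
  then h.choose else 0

section Realization

variable {S : Type*}

def diffCoords (f g : Qpos → S) : Set ℚ≥0 :=
  {r | ∃ hr : 0 < r, f ⟨r, hr⟩ ≠ g ⟨r, hr⟩}

lemma diffCoords_comm (f g : Qpos → S) : diffCoords f g = diffCoords g f := by
  simp only [diffCoords, ne_comm]

open Classical in
lemma qdist_eq (f g : Qpos → S) : qdist f g =
    if h : ∃ m, IsGreatest (diffCoords f g) m then h.choose else 0 :=
  rfl

lemma qdist_comm (f g : Qpos → S) : qdist f g = qdist g f := by
  rw [qdist_eq, qdist_eq, diffCoords_comm f g]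

lemma isGreatest_qdist {f g : Qpos → S} (h : ∃ m, IsGreatest (diffCoords f g) m) :
    IsGreatest (diffCoords f g) (qdist f g) := by
  rw [qdist_eq, dif_pos h]
  exact h.choose_spec

lemma qdist_eq_of_isGreatest {f g : Qpos → S} {m : ℚ≥0} (hm : IsGreatest (diffCoords f g) m) :
    qdist f g = m :=
  (isGreatest_qdist ⟨m, hm⟩).unique hm

lemma isGreatest_qdist_of_pos {f g : Qpos → S} (h : 0 < qdist f g) :
    IsGreatest (diffCoords f g) (qdist f g) := by
  by_contra hG
  rw [qdist_eq, dif_neg fun hex => hG (isGreatest_qdist hex)] at h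
  exact h.false

lemma qdist_eq_of_eq_of_gt {f g : Qpos → S} {m : Qpos} (hne : f m ≠ g m)
    (heq : ∀ r, m < r → f r = g r) : qdist f g = m :=
  qdist_eq_of_isGreatest
    ⟨⟨m.2, hne⟩, fun r ⟨hr, hfg⟩ => le_of_not_gt fun hmr => hfg (heq ⟨r, hr⟩ hmr)⟩

section FiniteSupport

variable {s₀ : S} {f g : Qpos → S}

lemma diffCoords_finite (hf : (VSupp s₀ f).Finite) (hg : (VSupp s₀ g).Finite) :
    (diffCoords f g).Finite := by
  refine ((hf.union hg).image Subtype.val).subset ?_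
  rintro r ⟨hr, hfg⟩
  by_cases hfr : f ⟨r, hr⟩ = s₀
  · exact ⟨⟨r, hr⟩, Or.inr fun hgr => hfg (hfr.trans hgr.symm), rfl⟩
  · exact ⟨⟨r, hr⟩, Or.inl hfr, rfl⟩

lemma le_qdist_of_ne (hf : (VSupp s₀ f).Finite) (hg : (VSupp s₀ g).Finite) {r : Qpos}
    (h : f r ≠ g r) : r.1 ≤ qdist f g := by
  obtain ⟨m, hm, hmax⟩ :=
    Set.exists_max_image _ id (diffCoords_finite hf hg) ⟨r.1, r.2, h⟩
  exact (isGreatest_qdist ⟨m, hm, hmax⟩).2 ⟨r.2, h⟩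

lemma eq_of_qdist_lt (hf : (VSupp s₀ f).Finite) (hg : (VSupp s₀ g).Finite) {r : Qpos}
    (h : qdist f g < r.1) : f r = g r := by
  by_contra hne
  exact h.not_ge (le_qdist_of_ne hf hg hne)

end FiniteSupport

def graft (s₀ : S) (f : Qpos → S) (m : Qpos) (s : S) : Qpos → S :=
  fun r => if m < r then f r else if r = m then s else s₀

section Graft

variable {s₀ : S} {f : Qpos → S} {m : Qpos} {s : S}

lemma graft_of_gt {r : Qpos} (h : m < r) : graft s₀ f m s r = f r := if_pos h

lemma graft_self : graft s₀ f m s m = s := by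
  simp [graft]

lemma vSupp_graft_finite (hf : (VSupp s₀ f).Finite) : (VSupp s₀ (graft s₀ f m s)).Finite := by
  refine (hf.union (Set.finite_singleton m)).subset fun r hr => ?_
  simp only [VSupp, graft, Set.mem_ofPred_eq] at hr
  split_ifs at hr with hmr hrm
  · exact Or.inl hr
  · exact Or.inr hrm
  · exact absurd rfl hr

lemma qdist_graft_of_qdist_le {g : Qpos → S} (hf : (VSupp s₀ f).Finite)
    (hg : (VSupp s₀ g).Finite) (hgf : qdist g f ≤ m) (hs : s ≠ g m) :
    qdist (graft s₀ f m s) g = m := by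
  refine qdist_eq_of_eq_of_gt (by rwa [graft_self]) fun r hr => ?_
  rw [graft_of_gt hr]
  exact (eq_of_qdist_lt hg hf (hgf.trans_lt hr)).symm

lemma qdist_graft_of_lt_qdist {g : Qpos → S} (h : m < qdist f g) :
    qdist (graft s₀ f m s) g = qdist f g := by
  obtain ⟨⟨hpos, hne⟩, hmax⟩ := isGreatest_qdist_of_pos (pos_of_gt h)
  have hm : m < ⟨qdist f g, hpos⟩ := h
  refine qdist_eq_of_eq_of_gt (m := ⟨qdist f g, hpos⟩) (by rwa [graft_of_gt hm]) fun r hr => ?_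
  rw [graft_of_gt (hm.trans hr)]
  by_contra hfg
  exact hr.not_ge (hmax ⟨r.2, hfg⟩)

end Graft

end Realization

/-- `V_S` realizes every one-point `ℚ≥0`-valued ultrametric extension of each of its
finite subspaces: for finite `A ⊆ V_S` and prescribed positive distances `ρ`
satisfying the two ultrametric compatibility inequalities, some `v ∈ V_S` realizes
them. -/
theorem stmt9 {S : Type*} [Infinite S] (s₀ : S)
    (A : Set (VS S s₀)) (hA : A.Finite) (ρ : VS S s₀ → ℚ≥0)
    (hρpos : ∀ a ∈ A, 0 < ρ a)
    (h1 : ∀ a ∈ A, ∀ a' ∈ A, ρ a ≤ max (qdist a.1 a'.1) (ρ a'))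
    (h2 : ∀ a ∈ A, ∀ a' ∈ A, qdist a.1 a'.1 ≤ max (ρ a) (ρ a')) :
    ∃ v : VS S s₀, ∀ a ∈ A, qdist v.1 a.1 = ρ a := by
  rcases A.eq_empty_or_nonempty with rfl | hAne
  · exact ⟨⟨fun _ => s₀, by simp [VSupp]⟩, by simp⟩
  obtain ⟨a₀, ha₀, hmin⟩ := Set.exists_min_image A ρ hA hAne
  set m : Qpos := ⟨ρ a₀, hρpos a₀ ha₀⟩
  obtain ⟨s, hs⟩ := (hA.image fun a : VS S s₀ => a.1 m).infinite_compl.nonempty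
  refine ⟨⟨graft s₀ a₀.1 m s, vSupp_graft_finite a₀.2⟩, fun a ha => ?_⟩
  have hd_le : qdist a.1 a₀.1 ≤ ρ a := (h2 a ha a₀ ha₀).trans (max_eq_left (hmin a ha)).le
  rcases (hmin a ha).eq_or_lt with heq | hlt
  · rw [← heq]
    exact qdist_graft_of_qdist_le a₀.2 a.2 (hd_le.trans_eq heq.symm)
      fun hsa => hs ⟨a, ha, hsa.symm⟩
  · have hd : qdist a.1 a₀.1 = ρ a :=
      hd_le.antisymm ((le_max_iff.1 (h1 a ha a₀ ha₀)).resolve_right hlt.not_ge)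
    rw [qdist_comm] at hd
    exact hd ▸ qdist_graft_of_lt_qdist (hd ▸ hlt)
end
end

section
/- For every finite subset A ⊆ V_ℚ, every injective map p : A → V_ℚ, and every order automorphism h of ℚ^{≥0} such that d(p(x), p(y)) = h(d(x, y)) for all x, y ∈ A, there exists a bijection g : V_ℚ → V_ℚ extending p with d(g(x), g(y)) = h(d(x, y)) for all x, y ∈ V_ℚ. In particular (taking h the identity), every isometry between finite subsets of V_ℚ extends to a bijective self-isometry of V_ℚ; that is, V_ℚ is both dc-homogeneous and iso-homogeneous. -/
open scoped NNRat

noncomputable section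

-- helpers
namespace Hom12

abbrev Vq := VS ℚ 0

def Dset (f g : Qpos → ℚ) : Set ℚ≥0 := {r : ℚ≥0 | ∃ hr : 0 < r, f ⟨r, hr⟩ ≠ g ⟨r, hr⟩}

open Classical in
def qd (S : Set ℚ≥0) : ℚ≥0 := if h : ∃ m, IsGreatest S m then h.choose else 0

lemma qdist_eq_qd (f g : Qpos → ℚ) : qdist f g = qd (Dset f g) := rfl

lemma qd_isGreatest {S : Set ℚ≥0} (hfin : S.Finite) (hne : S.Nonempty) :
    IsGreatest S (qd S) := by
  have hex : ∃ m, IsGreatest S m := by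
    refine ⟨hfin.toFinset.max' (by simpa using hne), ?_, fun b hb => ?_⟩
    · simpa using hfin.toFinset.max'_mem (by simpa using hne)
    · exact Finset.le_max' _ _ (by simpa using hb)
  rw [qd, dif_pos hex]
  exact hex.choose_spec

lemma qd_le_iff {S : Set ℚ≥0} (hfin : S.Finite) {s : ℚ≥0} :
    qd S ≤ s ↔ ∀ r ∈ S, r ≤ s := by
  rcases S.eq_empty_or_nonempty with hS | hS
  · subst hS
    have hne : ¬ ∃ m, IsGreatest (∅ : Set ℚ≥0) m := by
      rintro ⟨m, hm, -⟩; exact hm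
    rw [qd, dif_neg hne]
    simp
  · have G := qd_isGreatest hfin hS
    exact ⟨fun H r hr => (G.2 hr).trans H, fun H => H _ G.1⟩

lemma dfin (f g : Vq) : (Dset f.1 g.1).Finite := by
  have : Dset f.1 g.1 ⊆ Subtype.val '' (VSupp 0 f.1 ∪ VSupp 0 g.1) := by
    rintro r ⟨hr, hne⟩
    refine ⟨⟨r, hr⟩, ?_, rfl⟩
    by_cases hf : f.1 ⟨r, hr⟩ = 0
    · exact Or.inr (by simp [VSupp, hf ▸ hne.symm])
    · exact Or.inl hf
  exact ((f.2.union g.2).image _).subset this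

lemma vd_le_iff (f g : Vq) {s : ℚ≥0} :
    qdist f.1 g.1 ≤ s ↔ ∀ r : ℚ≥0, ∀ hr : 0 < r, f.1 ⟨r, hr⟩ ≠ g.1 ⟨r, hr⟩ → r ≤ s := by
  rw [qdist_eq_qd, qd_le_iff (dfin f g)]
  constructor
  · intro H r hr hne; exact H r ⟨hr, hne⟩
  · rintro H r ⟨hr, hne⟩; exact H r hr hne

lemma vd_le_of (f g : Vq) {s : ℚ≥0}
    (H : ∀ r : ℚ≥0, ∀ hr : 0 < r, s < r → f.1 ⟨r, hr⟩ = g.1 ⟨r, hr⟩) :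
    qdist f.1 g.1 ≤ s := by
  rw [vd_le_iff]
  intro r hr hne
  by_contra hc
  exact hne (H r hr (lt_of_not_ge hc))

lemma le_vd (f g : Vq) {r : ℚ≥0} {hr : 0 < r} (hne : f.1 ⟨r, hr⟩ ≠ g.1 ⟨r, hr⟩) :
    r ≤ qdist f.1 g.1 :=
  (vd_le_iff f g).mp le_rfl r hr hne

lemma vd_self (f : Vq) : qdist f.1 f.1 = 0 := by
  have := vd_le_of f f (s := 0) (fun _ _ _ => rfl)
  simpa using this

lemma vd_eq_zero_iff (f g : Vq) : qdist f.1 g.1 = 0 ↔ f = g := by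
  constructor
  · intro h0
    by_contra hne
    have : f.1 ≠ g.1 := fun hh => hne (Subtype.ext hh)
    obtain ⟨t, ht⟩ := Function.ne_iff.mp this
    have := le_vd f g (r := t.1) (hr := t.2) (by simpa using ht)
    rw [h0, le_zero_iff] at this
    exact absurd this (ne_of_gt t.2)
  · rintro rfl; exact vd_self f

lemma vd_comm (f g : Vq) : qdist f.1 g.1 = qdist g.1 f.1 := by
  rw [qdist_eq_qd, qdist_eq_qd]
  congr 1
  ext r
  exact ⟨fun ⟨hr, hne⟩ => ⟨hr, hne.symm⟩, fun ⟨hr, hne⟩ => ⟨hr, hne.symm⟩⟩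

lemma vd_ultra (f g k : Vq) :
    qdist f.1 k.1 ≤ max (qdist f.1 g.1) (qdist g.1 k.1) := by
  rw [vd_le_iff]
  intro r hr hne
  by_cases hfg : f.1 ⟨r, hr⟩ = g.1 ⟨r, hr⟩
  · exact le_max_of_le_right (le_vd g k (hfg ▸ hne))
  · exact le_max_of_le_left (le_vd f g hfg)

lemma vd_isoceles (f g k : Vq) (hlt : qdist g.1 k.1 < qdist f.1 g.1) :
    qdist f.1 k.1 = qdist f.1 g.1 := by
  refine le_antisymm ((vd_ultra f g k).trans (by rw [max_eq_left hlt.le])) ?_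
  rcases le_max_iff.mp (vd_ultra f k g) with H | H
  · exact H
  · rw [vd_comm k g] at H
    exact absurd H (not_le_of_gt hlt)

lemma oi_zero (h : ℚ≥0 ≃o ℚ≥0) : h 0 = 0 := by
  have h0 : h 0 ≤ h (h.symm 0) := h.monotone zero_le
  rw [h.apply_symm_apply] at h0
  exact le_antisymm h0 zero_le

def Good (h : ℚ≥0 ≃o ℚ≥0) (B : Finset Vq) (q : Vq → Vq) : Prop :=
  ∀ x ∈ B, ∀ y ∈ B, qdist (q x).1 (q y).1 = h (qdist x.1 y.1)

lemma good_injOn {h : ℚ≥0 ≃o ℚ≥0} {B : Finset Vq} {q : Vq → Vq}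
    (hG : Good h B q) : Set.InjOn q (B : Set Vq) := by
  intro x hx y hy hxy
  have h1 : qdist (q x).1 (q y).1 = 0 := by rw [hxy]; exact vd_self _
  rw [hG x hx y hy] at h1
  have h2 : qdist x.1 y.1 = 0 := h.injective (by rw [h1, oi_zero])
  exact (vd_eq_zero_iff x y).mp h2

lemma extend_fwd (h : ℚ≥0 ≃o ℚ≥0) (B : Finset Vq) (q : Vq → Vq)
    (hG : Good h B q) (x : Vq) :
    ∃ B' : Finset Vq, ∃ q' : Vq → Vq,
      B ⊆ B' ∧ x ∈ B' ∧ (∀ b ∈ B, q' b = q b) ∧ Good h B' q' := by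
  classical
  by_cases hx : x ∈ B
  · exact ⟨B, q, subset_rfl, hx, fun _ _ => rfl, hG⟩
  rcases B.eq_empty_or_nonempty with hB | hB
  · subst hB
    refine ⟨{x}, q, by simp, by simp, by simp, ?_⟩
    intro u hu v hv
    rw [Finset.mem_singleton] at hu hv
    subst hu; subst hv
    rw [vd_self, vd_self, oi_zero]
  · obtain ⟨a, haB, hamin⟩ := B.exists_min_image (fun b => qdist x.1 b.1) hB
    have hxa0 : qdist x.1 a.1 ≠ 0 := by
      intro h0
      exact hx ((vd_eq_zero_iff x a).mp h0 ▸ haB)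
    have hrpos : 0 < h (qdist x.1 a.1) := by
      rw [pos_iff_ne_zero]
      intro h0
      exact hxa0 (h.injective (by rw [h0, oi_zero]))
    set r : ℚ≥0 := h (qdist x.1 a.1) with hrdef
    obtain ⟨v, hv⟩ := Infinite.exists_notMem_finset
      (B.image (fun b => (q b).1 ⟨r, hrpos⟩))
    have hvne : ∀ b ∈ B, v ≠ (q b).1 ⟨r, hrpos⟩ := by
      intro b hb hve
      exact hv (Finset.mem_image.mpr ⟨b, hb, hve.symm⟩)
    set yf : Qpos → ℚ := fun t => if r < t.1 then (q a).1 t else if t.1 = r then v else 0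
      with hyf
    have hyfin : (VSupp 0 yf).Finite := by
      have hsub : VSupp 0 yf ⊆ insert ⟨r, hrpos⟩ (VSupp 0 (q a).1) := by
        intro t ht
        simp only [VSupp, Set.mem_setOf_eq, hyf] at ht
        by_cases h1 : r < t.1
        · rw [if_pos h1] at ht
          exact Set.mem_insert_iff.mpr (Or.inr ht)
        · rw [if_neg h1] at ht
          by_cases h2 : t.1 = r
          · exact Set.mem_insert_iff.mpr (Or.inl (Subtype.ext h2))
          · rw [if_neg h2] at ht; exact absurd rfl ht
      exact (((q a).2.insert _)).subset hsub
    set y : Vq := ⟨yf, hyfin⟩ with hydef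
    have hyr : y.1 ⟨r, hrpos⟩ = v := by
      show yf ⟨r, hrpos⟩ = v
      rw [hyf]
      simp
    have hlow : ∀ b ∈ B, r ≤ qdist y.1 (q b).1 := by
      intro b hb
      exact le_vd y (q b) (hr := hrpos) (by rw [hyr]; exact hvne b hb)
    have hya : qdist y.1 (q a).1 = r := by
      refine le_antisymm (vd_le_of y (q a) ?_) (hlow a haB)
      intro t ht hlt
      show yf ⟨t, ht⟩ = (q a).1 ⟨t, ht⟩
      rw [hyf]; simp [hlt]
    have key : ∀ b ∈ B, qdist y.1 (q b).1 = h (qdist x.1 b.1) := by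
      intro b hb
      rcases eq_or_lt_of_le (hamin b hb) with heq | hlt
      · -- equal distances
        have hab : qdist a.1 b.1 ≤ qdist x.1 a.1 := by
          have := vd_ultra a x b
          rw [vd_comm a x, ← heq] at this
          simpa using this
        refine le_antisymm ?_ (by rw [← heq]; exact hlow b hb)
        calc qdist y.1 (q b).1 ≤ max (qdist y.1 (q a).1) (qdist (q a).1 (q b).1) :=
              vd_ultra y (q a) (q b)
          _ ≤ r := by
              rw [hya, hG a haB b hb]
              exact max_le le_rfl (h.monotone hab)
          _ = h (qdist x.1 b.1) := by rw [hrdef, heq]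
      · -- strictly larger
        have hab : qdist a.1 b.1 = qdist x.1 b.1 := by
          refine le_antisymm ?_ ?_
          · have := vd_ultra a x b
            rw [vd_comm a x] at this
            exact this.trans (max_le (hamin b hb) le_rfl)
          · rcases le_max_iff.mp (vd_ultra x a b) with H | H
            · exact absurd H (not_le_of_gt hlt)
            · exact H
        have hqab : qdist (q a).1 (q b).1 = h (qdist x.1 b.1) := by
          rw [hG a haB b hb, hab]
        have hlt' : qdist (q a).1 y.1 < qdist (q b).1 (q a).1 := by
          rw [vd_comm (q a) y, hya, vd_comm (q b) (q a), hqab]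
          exact h.strictMono hlt
        have := vd_isoceles (q b) (q a) y hlt'
        rw [vd_comm (q b) y] at this
        rw [this, vd_comm (q b) (q a), hqab]
    refine ⟨insert x B, Function.update q x y, Finset.subset_insert _ _,
      Finset.mem_insert_self _ _, fun b hb => Function.update_of_ne (fun he => hx (by rw [← he]; exact hb)) _ _, ?_⟩
    intro u hu w hw
    rcases Finset.mem_insert.mp hu with hux | huB <;>
      rcases Finset.mem_insert.mp hw with hwx | hwB
    · subst hux; subst hwx
      rw [Function.update_self, vd_self, vd_self, oi_zero]
    · subst hux
      rw [Function.update_self,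
        Function.update_of_ne (fun he => hx (by rw [← he]; exact hwB))]
      exact key w hwB
    · subst hwx
      rw [Function.update_self,
        Function.update_of_ne (fun he => hx (by rw [← he]; exact huB)),
        vd_comm (q u) y, key u huB, vd_comm w u]
    · rw [Function.update_of_ne (fun he => hx (by rw [← he]; exact huB)),
        Function.update_of_ne (fun he => hx (by rw [← he]; exact hwB))]
      exact hG u huB w hwB

instance : Countable ℚ≥0 := NNRat.coe_injective.countable

instance : Countable Vq := by
  have : Function.Injective (fun f : Vq => Finsupp.mk f.2.toFinset f.1
      (fun a => by simp [VSupp, Set.Finite.mem_toFinset])) := by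
    intro f g hfg
    exact Subtype.ext (congrArg Finsupp.toFun hfg)
  exact this.countable

instance : Nonempty Vq := ⟨⟨fun _ => 0, by
  have : VSupp (0 : ℚ) (fun _ => 0) = ∅ := by
    ext t; simp [VSupp]
  rw [this]; exact Set.finite_empty⟩⟩

lemma extend_bwd (h : ℚ≥0 ≃o ℚ≥0) (B : Finset Vq) (q : Vq → Vq)
    (hG : Good h B q) (z : Vq) :
    ∃ B' : Finset Vq, ∃ q' : Vq → Vq,
      B ⊆ B' ∧ (∀ b ∈ B, q' b = q b) ∧ Good h B' q' ∧ ∃ x ∈ B', q' x = z := by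
  classical
  set s := Function.invFunOn q ↑B with hsdef
  set C := B.image q with hCdef
  have hsq : ∀ b ∈ B, s (q b) = b := fun b hb =>
    (good_injOn hG).leftInvOn_invFunOn (Finset.mem_coe.mpr hb)
  have hCgood : Good h.symm C s := by
    intro u hu w hw
    obtain ⟨b, hbB, rfl⟩ := Finset.mem_image.mp hu
    obtain ⟨b', hb'B, rfl⟩ := Finset.mem_image.mp hw
    rw [hsq b hbB, hsq b' hb'B, hG b hbB b' hb'B, h.symm_apply_apply]
  obtain ⟨C', s', hCC', hzC', hss', hGood'⟩ := extend_fwd h.symm C s hCgood z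
  set q' := Function.invFunOn s' ↑C' with hq'def
  have hq's' : ∀ c ∈ C', q' (s' c) = c := fun c hc =>
    (good_injOn hGood').leftInvOn_invFunOn (Finset.mem_coe.mpr hc)
  have hs'qb : ∀ b ∈ B, s' (q b) = b := by
    intro b hbB
    rw [hss' _ (Finset.mem_image_of_mem q hbB), hsq b hbB]
  refine ⟨C'.image s', q', ?_, ?_, ?_,
    ⟨s' z, Finset.mem_image_of_mem _ hzC', hq's' z hzC'⟩⟩
  · intro b hbB
    exact Finset.mem_image.mpr ⟨q b, hCC' (Finset.mem_image_of_mem q hbB), hs'qb b hbB⟩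
  · intro b hbB
    have h1 : q' (s' (q b)) = q b := hq's' _ (hCC' (Finset.mem_image_of_mem q hbB))
    rw [hs'qb b hbB] at h1
    exact h1
  · intro u hu w hw
    obtain ⟨c, hc, rfl⟩ := Finset.mem_image.mp hu
    obtain ⟨c', hc', rfl⟩ := Finset.mem_image.mp hw
    rw [hq's' c hc, hq's' c' hc', hGood' c hc c' hc', h.apply_symm_apply]

lemma extend_both (h : ℚ≥0 ≃o ℚ≥0) {B : Finset Vq} {q : Vq → Vq}
    (hG : Good h B q) (z : Vq) :
    ∃ E : Finset Vq × (Vq → Vq),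
      Good h E.1 E.2 ∧ B ⊆ E.1 ∧ (∀ b ∈ B, E.2 b = q b) ∧ z ∈ E.1 ∧
        ∃ x ∈ E.1, E.2 x = z := by
  obtain ⟨B₁, q₁, hBB₁, hzB₁, hqq₁, hG₁⟩ := extend_fwd h B q hG z
  obtain ⟨B₂, q₂, hB₁B₂, hq₁q₂, hG₂, x, hxB₂, hq₂x⟩ := extend_bwd h B₁ q₁ hG₁ z
  exact ⟨(B₂, q₂), hG₂, hBB₁.trans hB₁B₂,
    fun b hb => (hq₁q₂ b (hBB₁ hb)).trans (hqq₁ b hb),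
    hB₁B₂ hzB₁, x, hxB₂, hq₂x⟩

def seq (h : ℚ≥0 ≃o ℚ≥0) (B₀ : Finset Vq) (p : Vq → Vq) (hG₀ : Good h B₀ p)
    (e : ℕ → Vq) : ℕ → {E : Finset Vq × (Vq → Vq) // Good h E.1 E.2}
  | 0 => ⟨(B₀, p), hG₀⟩
  | n + 1 =>
    ⟨(extend_both h (seq h B₀ p hG₀ e n).2 (e n)).choose,
      ((extend_both h (seq h B₀ p hG₀ e n).2 (e n)).choose_spec).1⟩

lemma seq_spec (h : ℚ≥0 ≃o ℚ≥0) (B₀ : Finset Vq) (p : Vq → Vq) (hG₀ : Good h B₀ p)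
    (e : ℕ → Vq) (n : ℕ) :
    (seq h B₀ p hG₀ e n).1.1 ⊆ (seq h B₀ p hG₀ e (n + 1)).1.1 ∧
    (∀ b ∈ (seq h B₀ p hG₀ e n).1.1,
        (seq h B₀ p hG₀ e (n + 1)).1.2 b = (seq h B₀ p hG₀ e n).1.2 b) ∧
    e n ∈ (seq h B₀ p hG₀ e (n + 1)).1.1 ∧
    ∃ x ∈ (seq h B₀ p hG₀ e (n + 1)).1.1, (seq h B₀ p hG₀ e (n + 1)).1.2 x = e n := by
  have S := (extend_both h (seq h B₀ p hG₀ e n).2 (e n)).choose_spec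
  exact ⟨S.2.1, S.2.2.1, S.2.2.2.1, S.2.2.2.2⟩

lemma seq_mono (h : ℚ≥0 ≃o ℚ≥0) (B₀ : Finset Vq) (p : Vq → Vq) (hG₀ : Good h B₀ p)
    (e : ℕ → Vq) {m n : ℕ} (hmn : m ≤ n) :
    (seq h B₀ p hG₀ e m).1.1 ⊆ (seq h B₀ p hG₀ e n).1.1 := by
  induction n, hmn using Nat.le_induction with
  | base => exact subset_rfl
  | succ n hmn ih => exact ih.trans (seq_spec h B₀ p hG₀ e n).1

lemma seq_agree (h : ℚ≥0 ≃o ℚ≥0) (B₀ : Finset Vq) (p : Vq → Vq) (hG₀ : Good h B₀ p)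
    (e : ℕ → Vq) {m n : ℕ} (hmn : m ≤ n) :
    ∀ b ∈ (seq h B₀ p hG₀ e m).1.1,
      (seq h B₀ p hG₀ e n).1.2 b = (seq h B₀ p hG₀ e m).1.2 b := by
  induction n, hmn using Nat.le_induction with
  | base => exact fun _ _ => rfl
  | succ n hmn ih =>
    intro b hb
    rw [(seq_spec h B₀ p hG₀ e n).2.1 b (seq_mono h B₀ p hG₀ e hmn hb), ih b hb]

end Hom12

open Hom12

/-- `V_ℚ` is dc-homogeneous (and, taking `h` the identity, iso-homogeneous): every
finite partial dc-isomorphism with distance part an order automorphism `h` of `ℚ≥0`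
extends to a global bijection scaling distances by `h`. -/
theorem stmt12 (A : Set (VS ℚ 0)) (hA : A.Finite)
    (p : VS ℚ 0 → VS ℚ 0) (hinj : Set.InjOn p A)
    (h : ℚ≥0 ≃o ℚ≥0)
    (hp : ∀ x ∈ A, ∀ y ∈ A, qdist (p x).1 (p y).1 = h (qdist x.1 y.1)) :
    ∃ g : VS ℚ 0 → VS ℚ 0, Function.Bijective g ∧
      (∀ x ∈ A, g x = p x) ∧
      ∀ x y : VS ℚ 0, qdist (g x).1 (g y).1 = h (qdist x.1 y.1) := by
  classical
  obtain ⟨e, he⟩ := exists_surjective_nat Vq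
  set B₀ : Finset Vq := hA.toFinset with hB₀
  have hG₀ : Good h B₀ p := fun x hx y hy =>
    hp x (hA.mem_toFinset.mp hx) y (hA.mem_toFinset.mp hy)
  set Q : ℕ → {E : Finset Vq × (Vq → Vq) // Good h E.1 E.2} := seq h B₀ p hG₀ e
    with hQ
  have hmono : ∀ {m n : ℕ}, m ≤ n → (Q m).1.1 ⊆ (Q n).1.1 :=
    fun hmn => seq_mono h B₀ p hG₀ e hmn
  have hagree : ∀ {m n : ℕ}, m ≤ n → ∀ b ∈ (Q m).1.1, (Q n).1.2 b = (Q m).1.2 b :=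
    fun hmn => seq_agree h B₀ p hG₀ e hmn
  have hspec := seq_spec h B₀ p hG₀ e
  set nx : Vq → ℕ := fun x => (he x).choose with hnx
  have hen : ∀ x, e (nx x) = x := fun x => (he x).choose_spec
  have hxmem : ∀ x : Vq, x ∈ (Q (nx x + 1)).1.1 := by
    intro x
    have := (hspec (nx x)).2.2.1
    rwa [hen x] at this
  set g : Vq → Vq := fun x => (Q (nx x + 1)).1.2 x with hg
  have hgval : ∀ (x : Vq) (N : ℕ), nx x + 1 ≤ N → (Q N).1.2 x = g x :=
    fun x N hN => hagree hN x (hxmem x)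
  have hdist : ∀ x y : Vq, qdist (g x).1 (g y).1 = h (qdist x.1 y.1) := by
    intro x y
    set N := max (nx x + 1) (nx y + 1) with hN
    have hx : x ∈ (Q N).1.1 := hmono (le_max_left _ _) (hxmem x)
    have hy : y ∈ (Q N).1.1 := hmono (le_max_right _ _) (hxmem y)
    have := (Q N).2 x hx y hy
    rwa [hgval x N (le_max_left _ _), hgval y N (le_max_right _ _)] at this
  refine ⟨g, ⟨?_, ?_⟩, ?_, hdist⟩
  · -- injective
    intro x y hxy
    have h1 : qdist (g x).1 (g y).1 = 0 := by rw [hxy]; exact vd_self _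
    rw [hdist x y] at h1
    have h2 : qdist x.1 y.1 = 0 := h.injective (by rw [h1, oi_zero])
    exact (vd_eq_zero_iff x y).mp h2
  · -- surjective
    intro z
    obtain ⟨x, hxB, hx⟩ := (hspec (nx z)).2.2.2
    refine ⟨x, ?_⟩
    have h1 : (Q (max (nx x + 1) (nx z + 1))).1.2 x = g x :=
      hgval x _ (le_max_left _ _)
    have h2 : (Q (max (nx x + 1) (nx z + 1))).1.2 x = (Q (nx z + 1)).1.2 x :=
      hagree (le_max_right _ _) x hxB
    rw [← h1, h2, hx, hen z]
  · -- extends p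
    intro x hxA
    have hx0 : x ∈ (Q 0).1.1 := by
      show x ∈ B₀
      exact hA.mem_toFinset.mpr hxA
    exact hagree (Nat.zero_le (nx x + 1)) x hx0

end
end

section
/- Let S be a set with a distinguished element 0 ∈ S. Then \bar{V}_S is the Cauchy completion of V_S in the following sense: (i) V_S ⊆ \bar{V}_S and V_S is dense in \bar{V}_S, i.e., for every f ∈ \bar{V}_S and every rational r > 0 there is g ∈ V_S with d(f, g) < r; and (ii) \bar{V}_S is Cauchy complete: for every sequence (f_n) in \bar{V}_S and every sequence (r_n) of positive rationals converging to 0 such that B_{r_{n+1}}(f_{n+1}) ⊆ B_{r_n}(f_n) for all n, the intersection ⋂_n B_{r_n}(f_n) is nonempty. -/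
open scoped NNRat

noncomputable section

/-- `\bar{V}_S`: functions `ℚ^{>0} → S` whose support meets every ray `[q, ∞)`,
`q > 0`, in a finite set. -/
def VSbar (S : Type*) (s₀ : S) : Type _ :=
  {f : Qpos → S // ∀ q : ℚ≥0, 0 < q → {r : Qpos | f r ≠ s₀ ∧ q ≤ r.1}.Finite}

lemma qdist_self {S : Type*} (f : Qpos → S) : qdist f f = 0 := by
  rw [qdist, dif_neg]
  rintro ⟨m, ⟨hp, hne⟩, -⟩
  exact hne rfl

lemma qdist_lt_of {S : Type*} {f g : Qpos → S} {r : ℚ≥0} (hr : 0 < r)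
    (h : ∀ s : Qpos, r ≤ s.1 → f s = g s) : qdist f g < r := by
  rw [qdist]
  split_ifs with hex
  · obtain ⟨⟨hp, hne⟩, -⟩ := hex.choose_spec
    by_contra hlt
    push_neg at hlt
    exact hne (h ⟨hex.choose, hp⟩ hlt)
  · exact hr

lemma agree_of_qdist_lt {S : Type*} {f g : Qpos → S} {r : ℚ≥0}
    (hfin : ∀ q : ℚ≥0, 0 < q → {x : Qpos | f x ≠ g x ∧ q ≤ x.1}.Finite)
    (hlt : qdist f g < r) : ∀ s : Qpos, r ≤ s.1 → f s = g s := by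
  intro s hs
  by_contra hne
  have hr : 0 < r := lt_of_le_of_lt zero_le hlt
  set A : Set Qpos := {x : Qpos | f x ≠ g x ∧ r ≤ x.1} with hA
  have hAfin : A.Finite := hfin r hr
  have hsA : s ∈ A := ⟨hne, hs⟩
  obtain ⟨m, hmA, hmax⟩ := hAfin.exists_maximalFor id A ⟨s, hsA⟩
  have hmax' : ∀ a ∈ A, a ≤ m := by
    intro a ha
    rcases le_total a m with h | h
    · exact h
    · exact hmax ha h
  have hG : IsGreatest {t : ℚ≥0 | ∃ ht : 0 < t, f ⟨t, ht⟩ ≠ g ⟨t, ht⟩} m.1 := by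
    constructor
    · exact ⟨m.2, hmA.1⟩
    · rintro t ⟨ht, hne'⟩
      rcases le_or_gt r t with h | h
      · exact Subtype.coe_le_coe.2 (hmax' ⟨t, ht⟩ ⟨hne', h⟩)
      · exact le_trans h.le (le_trans hs (Subtype.coe_le_coe.2 (hmax' s hsA)))
  have hex : ∃ x, IsGreatest {t : ℚ≥0 | ∃ ht : 0 < t, f ⟨t, ht⟩ ≠ g ⟨t, ht⟩} x := ⟨m.1, hG⟩
  have : qdist f g = m.1 := by
    rw [qdist, dif_pos hex]
    exact hex.choose_spec.unique hG
  rw [this] at hlt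
  exact absurd (le_trans hs (Subtype.coe_le_coe.2 (hmax' s hsA))) (not_le.2 hlt)

lemma diff_fin {S : Type*} {s₀ : S} (a b : VSbar S s₀) :
    ∀ q : ℚ≥0, 0 < q → {x : Qpos | a.1 x ≠ b.1 x ∧ q ≤ x.1}.Finite := by
  intro q hq
  refine ((a.2 q hq).union (b.2 q hq)).subset ?_
  rintro x ⟨hne, hle⟩
  by_cases h : a.1 x = s₀
  · exact Or.inr ⟨fun hb => hne (h.trans hb.symm), hle⟩
  · exact Or.inl ⟨h, hle⟩

/-- `\bar{V}_S` is the Cauchy completion of `V_S`: (i) every element of `V_S` lies in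
`\bar{V}_S`, (ii) `V_S` is dense in `\bar{V}_S`, and (iii) `\bar{V}_S` is Cauchy
complete: every nested sequence of open balls whose radii tend to `0` has nonempty
intersection. -/
theorem stmt13 {S : Type*} (s₀ : S) :
    (∀ f : VS S s₀, ∀ q : ℚ≥0, 0 < q → {r : Qpos | f.1 r ≠ s₀ ∧ q ≤ r.1}.Finite) ∧
    (∀ f : VSbar S s₀, ∀ r : ℚ≥0, 0 < r → ∃ g : VS S s₀, qdist f.1 g.1 < r) ∧
    (∀ (f : ℕ → VSbar S s₀) (r : ℕ → ℚ≥0),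
      (∀ n, 0 < r n) →
      (∀ ε : ℚ≥0, 0 < ε → ∃ N : ℕ, ∀ n ≥ N, r n < ε) →
      (∀ n, {g : VSbar S s₀ | qdist (f (n + 1)).1 g.1 < r (n + 1)} ⊆
            {g : VSbar S s₀ | qdist (f n).1 g.1 < r n}) →
      (⋂ n : ℕ, {g : VSbar S s₀ | qdist (f n).1 g.1 < r n}).Nonempty) := by
  classical
  refine ⟨?_, ?_, ?_⟩
  · intro f q hq
    exact f.2.subset fun x hx => hx.1
  · intro f r hr
    refine ⟨⟨fun x : Qpos => @ite _ (r ≤ x.1) (Classical.dec _) (f.1 x) s₀, ?_⟩, ?_⟩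
    · refine (f.2 r hr).subset ?_
      intro x hx
      simp only [VSupp, Set.mem_setOf_eq] at hx
      rcases Classical.em (r ≤ x.1) with h | h
      · rw [if_pos h] at hx; exact ⟨hx, h⟩
      · rw [if_neg h] at hx; exact absurd rfl hx
    · refine qdist_lt_of hr fun s hs => ?_
      simp [if_pos hs]
  · intro f r h1 h2 h3
    have hchain : ∀ n m : ℕ, n ≤ m →
        {g : VSbar S s₀ | qdist (f m).1 g.1 < r m} ⊆
        {g : VSbar S s₀ | qdist (f n).1 g.1 < r n} := by
      intro n m hnm
      induction m, hnm using Nat.le_induction with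
      | base => exact fun g hg => hg
      | succ m hnm ih => exact fun g hg => ih (h3 m hg)
    have hmem : ∀ m : ℕ, qdist (f m).1 (f m).1 < r m := by
      intro m; rw [qdist_self]; exact h1 m
    have hdist : ∀ n m : ℕ, n ≤ m → qdist (f n).1 (f m).1 < r n := by
      intro n m hnm
      exact hchain n m hnm (hmem m)
    choose N hN using fun x : Qpos => h2 x.1 x.2
    set g0 : Qpos → S := fun x => (f (N x)).1 x with hg0
    have key : ∀ (n : ℕ) (x : Qpos), r n ≤ x.1 → g0 x = (f n).1 x := by
      intro n x hx
      set M := max n (N x)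
      have e1 : (f n).1 x = (f M).1 x :=
        agree_of_qdist_lt (diff_fin _ _) (hdist n M (le_max_left _ _)) x hx
      have e2 : (f (N x)).1 x = (f M).1 x :=
        agree_of_qdist_lt (diff_fin _ _) (hdist (N x) M (le_max_right _ _)) x
          (hN x (N x) le_rfl).le
      simp only [hg0]; rw [e2, e1]
    have hgbar : ∀ q : ℚ≥0, 0 < q → {x : Qpos | g0 x ≠ s₀ ∧ q ≤ x.1}.Finite := by
      intro q hq
      obtain ⟨N0, hN0⟩ := h2 q hq
      refine ((f N0).2 q hq).subset ?_
      rintro x ⟨hne, hle⟩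
      refine ⟨?_, hle⟩
      rw [← key N0 x (le_trans (hN0 N0 le_rfl).le hle)]
      exact hne
    refine ⟨⟨g0, hgbar⟩, ?_⟩
    refine Set.mem_iInter.2 ?_
    intro n
    exact qdist_lt_of (h1 n) fun s hs => (key n s hs).symm

end
end

section
/- Let S be a set with a distinguished element 0 ∈ S containing at least one element s ≠ 0. Then \bar{V}_S is not spherically complete: there exist a sequence (f_n) in \bar{V}_S and a strictly decreasing sequence (r_n) of positive rationals such that B_{r_{n+1}}(f_{n+1}) ⊆ B_{r_n}(f_n) for all n and ⋂_n B_{r_n}(f_n) = ∅. -/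
open scoped NNRat

noncomputable section

lemma exists_greatest {S : Type*} {s₀ : S} (f g : VSbar S s₀)
    (hne : ∃ r : ℚ≥0, ∃ hr : 0 < r, f.1 ⟨r, hr⟩ ≠ g.1 ⟨r, hr⟩) :
    ∃ m, IsGreatest {r : ℚ≥0 | ∃ hr : 0 < r, f.1 ⟨r, hr⟩ ≠ g.1 ⟨r, hr⟩} m := by
  obtain ⟨r₀, hr₀, hd⟩ := hne
  set D : Set ℚ≥0 := {r : ℚ≥0 | ∃ hr : 0 < r, f.1 ⟨r, hr⟩ ≠ g.1 ⟨r, hr⟩} with hD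
  have hA : (D ∩ Set.Ici r₀).Finite := by
    have h1 := f.2 r₀ hr₀
    have h2 := g.2 r₀ hr₀
    have : (D ∩ Set.Ici r₀) ⊆ Subtype.val '' ({p : Qpos | f.1 p ≠ s₀ ∧ r₀ ≤ p.1} ∪
        {p : Qpos | g.1 p ≠ s₀ ∧ r₀ ≤ p.1}) := by
      rintro x ⟨⟨hx, hfg⟩, hge⟩
      by_cases hf : f.1 ⟨x, hx⟩ = s₀
      · exact ⟨⟨x, hx⟩, Or.inr ⟨fun h => hfg (hf.trans h.symm), hge⟩, rfl⟩
      · exact ⟨⟨x, hx⟩, Or.inl ⟨hf, hge⟩, rfl⟩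
    exact ((h1.union h2).image _).subset this
  have hmem : r₀ ∈ D ∩ Set.Ici r₀ := ⟨⟨hr₀, hd⟩, Set.mem_Ici.mpr (le_refl _)⟩
  obtain ⟨m, hmA, hmax⟩ := hA.exists_maximalFor id _ ⟨r₀, hmem⟩
  refine ⟨m, hmA.1, fun x hx => ?_⟩
  rcases le_or_gt r₀ x with hle | hlt
  · by_contra hlt'
    push_neg at hlt'
    exact absurd (hmax ⟨hx, hle⟩ (le_of_lt hlt')) (not_le.mpr hlt')
  · exact le_trans hlt.le hmA.2

lemma qdist_lt_iff {S : Type*} {s₀ : S} (f g : VSbar S s₀) {c : ℚ≥0} (hc : 0 < c) :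
    qdist f.1 g.1 < c ↔
      ∀ (q : ℚ≥0) (hq : 0 < q), c ≤ q → f.1 ⟨q, hq⟩ = g.1 ⟨q, hq⟩ := by
  classical
  unfold qdist
  split_ifs with h
  · have spec := h.choose_spec
    constructor
    · intro hlt q hq hcq
      by_contra hne
      exact absurd (lt_of_lt_of_le hlt hcq) (not_lt.mpr (spec.2 ⟨hq, hne⟩))
    · intro hall
      obtain ⟨hm, hne⟩ := spec.1
      by_contra hge
      exact hne (hall _ hm (not_lt.mp hge))
  · constructor
    · intro _ q hq hcq
      by_contra hne
      exact h (exists_greatest f g ⟨q, hq, hne⟩)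
    · intro _; exact hc


/-- If `S` has at least two elements, then `\bar{V}_S` is not spherically complete:
there is a nested sequence of open balls with strictly decreasing radii and empty
intersection. -/
theorem stmt14 {S : Type*} (s₀ s : S) (hs : s ≠ s₀) :
    ∃ (f : ℕ → VSbar S s₀) (r : ℕ → ℚ≥0),
      StrictAnti r ∧ (∀ n, 0 < r n) ∧
      (∀ n, {g : VSbar S s₀ | qdist (f (n + 1)).1 g.1 < r (n + 1)} ⊆
            {g : VSbar S s₀ | qdist (f n).1 g.1 < r n}) ∧
      (⋂ n : ℕ, {g : VSbar S s₀ | qdist (f n).1 g.1 < r n}) = ∅ := by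
  classical
  set r : ℕ → ℚ≥0 := fun n => 1 + ((n : ℚ≥0) + 1)⁻¹ with hr
  have hanti : StrictAnti r := by
    intro m n hmn
    have h1 : (0:ℚ≥0) < (m : ℚ≥0) + 1 := by positivity
    have h2 : ((m:ℚ≥0) + 1) < ((n:ℚ≥0) + 1) := by
      have : (m:ℚ≥0) < n := by exact_mod_cast hmn
      exact add_lt_add_left this 1
    have : ((n:ℚ≥0) + 1)⁻¹ < ((m:ℚ≥0) + 1)⁻¹ := by
      exact inv_strictAnti₀ h1 h2
    exact add_lt_add_right this 1
  have hr1 : ∀ n, 1 < r n := by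
    intro n
    have : (0:ℚ≥0) < ((n:ℚ≥0) + 1)⁻¹ := by positivity
    simpa [hr] using lt_add_of_pos_right 1 this
  have hrpos : ∀ n, 0 < r n := fun n => lt_trans one_pos (hr1 n)
  have hrinj : Function.Injective r := hanti.injective
  set F0 : ℕ → Qpos → S := fun n q => if ∃ k, k ≤ n ∧ 1 ≤ k ∧ q.1 = r k then s else s₀
    with hF0
  have hFmem : ∀ n, ∀ q : ℚ≥0, 0 < q → {p : Qpos | F0 n p ≠ s₀ ∧ q ≤ p.1}.Finite := by
    intro n q hq
    have : {p : Qpos | F0 n p ≠ s₀ ∧ q ≤ p.1} ⊆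
        (fun k => (⟨r k, hrpos k⟩ : Qpos)) '' (Set.Iic n) := by
      rintro p ⟨hp, -⟩
      simp only [hF0] at hp
      split_ifs at hp with hcond
      · obtain ⟨k, hk, -, hpk⟩ := hcond
        exact ⟨k, hk, Subtype.ext hpk.symm⟩
      · exact absurd rfl hp
    exact ((Set.finite_Iic n).image _).subset this
  set F : ℕ → VSbar S s₀ := fun n => ⟨F0 n, hFmem n⟩ with hF
  refine ⟨F, r, hanti, hrpos, ?_, ?_⟩
  · intro n g hg
    simp only [Set.mem_setOf_eq] at hg ⊢
    rw [qdist_lt_iff (F (n+1)) g (hrpos (n+1))] at hg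
    rw [qdist_lt_iff (F n) g (hrpos n)]
    intro q hq hcq
    have hq2 : r (n+1) ≤ q := le_trans (hanti (Nat.lt_succ_self n)).le hcq
    rw [← hg q hq hq2]
    show F0 n ⟨q, hq⟩ = F0 (n+1) ⟨q, hq⟩
    simp only [hF0]
    refine if_congr ?_ rfl rfl
    constructor
    · rintro ⟨k, hk, hk1, hqk⟩
      exact ⟨k, le_trans hk (Nat.le_succ n), hk1, hqk⟩
    · rintro ⟨k, hk, hk1, hqk⟩
      refine ⟨k, ?_, hk1, hqk⟩
      rcases Nat.lt_or_ge k (n+1) with h | h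
      · exact Nat.lt_succ_iff.mp h
      · have hkeq : k = n + 1 := le_antisymm hk h
        exfalso
        subst hkeq
        have : r (n+1) < r (n+1) :=
          lt_of_lt_of_le (hanti (Nat.lt_succ_self n)) (hqk ▸ hcq)
        exact lt_irrefl _ this
  · rw [Set.eq_empty_iff_forall_notMem]
    intro g hg
    have key : ∀ n : ℕ, g.1 ⟨r (n+1), hrpos (n+1)⟩ = s := by
      intro n
      have hgn := Set.mem_iInter.mp hg (n+1)
      simp only [Set.mem_setOf_eq] at hgn
      rw [qdist_lt_iff (F (n+1)) g (hrpos (n+1))] at hgn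
      have := hgn (r (n+1)) (hrpos (n+1)) (le_refl _)
      rw [← this]
      show F0 (n+1) ⟨r (n+1), hrpos (n+1)⟩ = s
      simp only [hF0]
      rw [if_pos ⟨n+1, le_refl _, Nat.succ_le_succ (Nat.zero_le n), rfl⟩]
    have hinf : {p : Qpos | g.1 p ≠ s₀ ∧ 1 ≤ p.1}.Infinite := by
      apply Set.infinite_of_injective_forall_mem
        (f := fun n : ℕ => (⟨r (n+1), hrpos (n+1)⟩ : Qpos))
      · intro a b hab
        have := hrinj (congrArg Subtype.val hab)
        omega
      · intro n
        exact ⟨(key n) ▸ hs, (hr1 (n+1)).le⟩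
    exact hinf (g.2 1 one_pos)

end
end

section
/- Let X be a set with a ℚ^{≥0}-valued ultrametric d. Assume: (i) X is iso-homogeneous, i.e., for every finite A ⊆ X and every injective map q : A → X with d(q(x), q(y)) = d(x, y) for all x, y ∈ A there is a bijection G : X → X extending q with d(G(x), G(y)) = d(x, y) for all x, y ∈ X; and (ii) for every order automorphism h of ℚ^{≥0} there exists a bijection F : X → X with d(F(x), F(y)) = h(d(x, y)) for all x, y ∈ X. Then X is dc-homogeneous: for every finite A ⊆ X, every injective map p : A → X, and every order automorphism h of ℚ^{≥0} with d(p(x), p(y)) = h(d(x, y)) for all x, y ∈ A, there is a bijection g : X → X extending p with d(g(x), g(y)) = h(d(x, y)) for all x, y ∈ X. -/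
open scoped NNRat

/-- A `ℚ≥0`-valued ultrametric on `X`. -/
def IsQUltra {X : Type*} (d : X → X → ℚ≥0) : Prop :=
  (∀ x y, d x y = 0 ↔ x = y) ∧ (∀ x y, d x y = d y x) ∧
  (∀ x y z, d x z ≤ max (d x y) (d y z))

/-!
If `F` is a global bijection scaling distances by `h`, then `p ∘ F⁻¹` is a partial isometry
on `F '' A`; extending it to a global isometry `G` by iso-homogeneity, `G ∘ F` extends `p`
and scales all distances by `h`.
-/

section

variable {X β : Type*} {d : X → X → β} {f : β → β} {A : Set X} {p : X → X}

lemma isometricOn_comp_symm_image (F : X ≃ X) (hF : ∀ x y, d (F x) (F y) = f (d x y))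
    (hp : ∀ x ∈ A, ∀ y ∈ A, d (p x) (p y) = f (d x y)) :
    ∀ x ∈ F '' A, ∀ y ∈ F '' A, d (p (F.symm x)) (p (F.symm y)) = d x y := by
  rintro _ ⟨a, ha, rfl⟩ _ ⟨b, hb, rfl⟩
  rw [F.symm_apply_apply, F.symm_apply_apply, hp a ha b hb, hF]

lemma injOn_comp_symm_image (F : X ≃ X) (hp : Set.InjOn p A) :
    Set.InjOn (p ∘ F.symm) (F '' A) :=
  hp.comp F.symm.injective.injOn fun _ ⟨a, ha, hx⟩ => by rwa [← hx, F.symm_apply_apply]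

end

theorem stmt18_general {X : Type*} (d : X → X → ℚ≥0)
    (hiso : ∀ A : Set X, A.Finite → ∀ q : X → X, Set.InjOn q A →
      (∀ x ∈ A, ∀ y ∈ A, d (q x) (q y) = d x y) →
      ∃ G : X → X, Function.Bijective G ∧ (∀ x ∈ A, G x = q x) ∧
        ∀ x y : X, d (G x) (G y) = d x y)
    (hproj : ∀ h : ℚ≥0 ≃o ℚ≥0, ∃ F : X → X, Function.Bijective F ∧
      ∀ x y : X, d (F x) (F y) = h (d x y)) :
    ∀ A : Set X, A.Finite → ∀ p : X → X, Set.InjOn p A →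
      ∀ h : ℚ≥0 ≃o ℚ≥0, (∀ x ∈ A, ∀ y ∈ A, d (p x) (p y) = h (d x y)) →
      ∃ g : X → X, Function.Bijective g ∧ (∀ x ∈ A, g x = p x) ∧
        ∀ x y : X, d (g x) (g y) = h (d x y) := by
  intro A hA p hp h hph
  obtain ⟨F₀, hF₀bij, hF⟩ := hproj h
  set F := Equiv.ofBijective F₀ hF₀bij
  obtain ⟨G, hGbij, hGp, hG⟩ := hiso (F '' A) (hA.image F) (p ∘ F.symm)
    (injOn_comp_symm_image F hp) (isometricOn_comp_symm_image F hF hph)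
  refine ⟨G ∘ F, hGbij.comp F.bijective, fun a ha => ?_, fun x y => ?_⟩
  · simp [hGp (F a) ⟨a, ha, rfl⟩]
  · simp [hG, F, hF]

/-- If a `ℚ≥0`-valued ultrametric space is iso-homogeneous and every order
automorphism of `ℚ≥0` is realized by some global bijection scaling distances by it,
then the space is dc-homogeneous. -/
theorem stmt18 {X : Type*} (d : X → X → ℚ≥0) (hd : IsQUltra d)
    (hiso : ∀ A : Set X, A.Finite → ∀ q : X → X, Set.InjOn q A →
      (∀ x ∈ A, ∀ y ∈ A, d (q x) (q y) = d x y) →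
      ∃ G : X → X, Function.Bijective G ∧ (∀ x ∈ A, G x = q x) ∧
        ∀ x y : X, d (G x) (G y) = d x y)
    (hproj : ∀ h : ℚ≥0 ≃o ℚ≥0, ∃ F : X → X, Function.Bijective F ∧
      ∀ x y : X, d (F x) (F y) = h (d x y)) :
    ∀ A : Set X, A.Finite → ∀ p : X → X, Set.InjOn p A →
      ∀ h : ℚ≥0 ≃o ℚ≥0, (∀ x ∈ A, ∀ y ∈ A, d (p x) (p y) = h (d x y)) →
      ∃ g : X → X, Function.Bijective g ∧ (∀ x ∈ A, g x = p x) ∧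
        ∀ x y : X, d (g x) (g y) = h (d x y) :=
  stmt18_general d hiso hproj
end

section
/- Let k be a field and consider the field of Hahn series HahnSeries(ℚ, k) (formal series with rational exponents, coefficients in k, and well-ordered support). Then the set K = {a ∈ HahnSeries(ℚ, k) : for every q ∈ ℚ, the set supp(a) ∩ (-∞, q] is finite} (equivalently, the series whose support is finite or an increasing sequence tending to +∞) is a subfield of HahnSeries(ℚ, k): it contains 0 and 1 and is closed under addition, negation, multiplication, and multiplicative inverses of nonzero elements. In particular, the subfield of HahnSeries(ℚ, k) generated by the finitely supported series is contained in K. -/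
open HahnSeries

lemma sums_finite (F : Finset ℚ) (n : ℕ) :
    {x : ℚ | ∃ l : List ℚ, (∀ y ∈ l, y ∈ F) ∧ l.length ≤ n ∧ l.sum = x}.Finite := by
  induction n with
  | zero =>
    apply Set.Finite.subset (Set.finite_singleton (0 : ℚ))
    rintro x ⟨l, -, hl, rfl⟩
    rw [Nat.le_zero, List.length_eq_zero_iff] at hl
    simp [hl]
  | succ n ih =>
    apply Set.Finite.subset (ih.union (Set.Finite.image2 (· + ·) F.finite_toSet ih))
    rintro x ⟨l, hmem, hlen, rfl⟩
    match l with
    | [] => exact Or.inl ⟨[], by simp⟩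
    | a :: t =>
      refine Or.inr ⟨a, hmem a (by simp), t.sum, ⟨t, fun y hy => hmem y (by simp [hy]),
        Nat.le_of_succ_le_succ hlen, rfl⟩, by simp⟩

lemma closure_ray_finite {S : Set ℚ} (hpos : ∀ s ∈ S, 0 < s)
    (hfin : ∀ q : ℚ, {r ∈ S | r ≤ q}.Finite) (q : ℚ) :
    {r ∈ (AddSubmonoid.closure S : Set ℚ) | r ≤ q}.Finite := by
  rcases S.eq_empty_or_nonempty with rfl | ⟨s₀, hs₀⟩
  · apply Set.Finite.subset (Set.finite_singleton (0 : ℚ))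
    rintro x ⟨hx, -⟩
    simpa [AddSubmonoid.closure_empty] using hx
  · have hne : ((hfin s₀).toFinset).Nonempty := ⟨s₀, by simp [hs₀]⟩
    set ε : ℚ := (hfin s₀).toFinset.min' hne with hε
    have hεS : ε ∈ S ∧ ε ≤ s₀ := by
      have := (hfin s₀).mem_toFinset.mp ((hfin s₀).toFinset.min'_mem hne)
      exact ⟨this.1, this.2⟩
    have hεpos : 0 < ε := hpos ε hεS.1
    have hle : ∀ s ∈ S, ε ≤ s := by
      intro s hs
      by_cases h : s ≤ s₀
      · exact (hfin s₀).toFinset.min'_le s (by simp [hs, h])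
      · exact le_trans hεS.2 (le_of_not_ge h)
    obtain ⟨N, hN⟩ := exists_nat_ge (q / ε)
    apply Set.Finite.subset (sums_finite (hfin q).toFinset N)
    rintro x ⟨hx, hxq⟩
    obtain ⟨l, hmem, rfl⟩ := AddSubmonoid.exists_list_of_mem_closure hx
    have hnn : ∀ y ∈ l, 0 ≤ y := fun y hy => (hpos y (hmem y hy)).le
    refine ⟨l, fun y hy => ?_, ?_, rfl⟩
    · exact (hfin q).mem_toFinset.mpr ⟨hmem y hy, le_trans (List.single_le_sum hnn y hy) hxq⟩
    · have h1 : (l.length : ℚ) * ε ≤ l.sum := by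
        have := List.card_nsmul_le_sum (l := l) (n := ε) (fun y hy => hle y (hmem y hy))
        simpa [nsmul_eq_mul] using this
      have h2 : (l.length : ℚ) ≤ q / ε := by
        rw [le_div_iff₀ hεpos]; exact h1.trans hxq
      exact_mod_cast h2.trans hN

lemma support_pow_subset {k : Type*} [Field k] (x : HahnSeries ℚ k) (n : ℕ) :
    (x ^ n).support ⊆ (AddSubmonoid.closure x.support : Set ℚ) := by
  induction n with
  | zero =>
    intro r hr
    rw [pow_zero] at hr
    rw [support_one] at hr
    simp only [Set.mem_singleton_iff] at hr
    exact hr ▸ (AddSubmonoid.closure x.support).zero_mem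
  | succ n ih =>
    intro r hr
    rw [pow_succ] at hr
    obtain ⟨i, hi, j, hj, rfl⟩ := support_mul_subset hr
    exact add_mem (ih hi) (AddSubmonoid.subset_closure hj)

lemma Kfield_inv {k : Type*} [Field k] {a : HahnSeries ℚ k}
    (ha : ∀ q : ℚ, {r ∈ a.support | r ≤ q}.Finite) (h0 : a ≠ 0) (q : ℚ) :
    {r ∈ (a⁻¹).support | r ≤ q}.Finite := by
  set v : ℚ := a.order with hv
  set c : k := (a.leadingCoeff)⁻¹ with hc
  have hr : c * a.leadingCoeff = 1 := inv_mul_cancel₀ (leadingCoeff_ne_zero.mpr h0)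
  set u : HahnSeries ℚ k := 1 - single (-v) c * a with hudef
  have hu : 0 < u.orderTop := unit_aux a hr (-v) (neg_add_cancel a.order)
  have hinv : a⁻¹ = single (-v) c * (SummableFamily.powers u).hsum := by
    have h := SummableFamily.one_sub_self_mul_hsum_powers hu
    have e : 1 - u = single (-v) c * a := by rw [hudef]; ring
    rw [e] at h
    refine inv_eq_of_mul_eq_one_right ?_
    rw [← mul_assoc, mul_comm a (single (-v) c), h]
  have hupos : ∀ s ∈ u.support, 0 < s := by
    intro s hs
    have h1 : u.orderTop ≤ (s : WithTop ℚ) := orderTop_le_of_coeff_ne_zero hs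
    have := lt_of_lt_of_le hu h1
    exact_mod_cast this
  have hufin : ∀ p : ℚ, {r ∈ u.support | r ≤ p}.Finite := by
    intro p
    apply Set.Finite.subset (((ha (p + v)).image (fun x => -v + x)).union
      (Set.finite_singleton 0))
    rintro s ⟨hs, hsp⟩
    have hs' : s ∈ (1 : HahnSeries ℚ k).support ∪ (-(single (-v) c * a)).support := by
      apply support_add_subset
      rw [hudef] at hs
      simpa [sub_eq_add_neg] using hs
    rcases hs' with h | h
    · rw [support_one] at h
      exact Or.inr h
    · rw [support_neg] at h
      obtain ⟨i, hi, j, hj, rfl⟩ := support_mul_subset h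
      have hi' : i = -v := support_single_subset hi
      subst hi'
      refine Or.inl ⟨j, ⟨hj, ?_⟩, rfl⟩
      beta_reduce at hsp
      linarith
  apply Set.Finite.subset ((closure_ray_finite hupos hufin (q + v)).image (fun x => -v + x))
  rintro s ⟨hs, hsq⟩
  rw [hinv] at hs
  obtain ⟨i, hi, j, hj, rfl⟩ := support_mul_subset hs
  have hi' : i = -v := support_single_subset hi
  subst hi'
  have hj' : j ∈ (AddSubmonoid.closure u.support : Set ℚ) := by
    have := SummableFamily.support_hsum_subset hj
    rw [Set.mem_iUnion] at this
    obtain ⟨n, hn⟩ := this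
    rw [show (SummableFamily.powers u) n = u ^ n from congrFun (SummableFamily.coe_powers hu) n] at hn
    exact support_pow_subset u n hn
  refine ⟨j, ⟨hj', ?_⟩, rfl⟩
  beta_reduce at hsq
  linarith
/-- The set of Hahn series over `ℚ` whose support meets every left ray `(-∞, q]` in a
finite set (equivalently, the support is finite or an increasing sequence tending to
`+∞`). -/
def Kfield (k : Type*) [Field k] : Set (HahnSeries ℚ k) :=
  {a | ∀ q : ℚ, {r ∈ a.support | r ≤ q}.Finite}

lemma Kfield_zero (k : Type*) [Field k] : (0 : HahnSeries ℚ k) ∈ Kfield k := by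
  intro q
  apply Set.Finite.subset (Set.finite_empty)
  rintro r ⟨hr, -⟩
  simp [support_zero] at hr

lemma Kfield_one (k : Type*) [Field k] : (1 : HahnSeries ℚ k) ∈ Kfield k := by
  intro q
  apply Set.Finite.subset (Set.finite_singleton (0 : ℚ))
  rintro r ⟨hr, -⟩
  rw [support_one] at hr
  exact hr

lemma Kfield_add (k : Type*) [Field k] :
    ∀ a ∈ Kfield k, ∀ b ∈ Kfield k, a + b ∈ Kfield k := by
  intro a ha b hb q
  apply Set.Finite.subset ((ha q).union (hb q))
  rintro r ⟨hr, hrq⟩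
  rcases support_add_subset _ _ hr with h | h
  · exact Or.inl ⟨h, hrq⟩
  · exact Or.inr ⟨h, hrq⟩

lemma Kfield_neg (k : Type*) [Field k] : ∀ a ∈ Kfield k, -a ∈ Kfield k := by
  intro a ha q
  apply Set.Finite.subset (ha q)
  rintro r ⟨hr, hrq⟩
  rw [support_neg] at hr
  exact ⟨hr, hrq⟩

lemma Kfield_mul (k : Type*) [Field k] :
    ∀ a ∈ Kfield k, ∀ b ∈ Kfield k, a * b ∈ Kfield k := by
  intro a ha b hb q
  by_cases h0 : a = 0
  · subst h0; simpa [zero_mul] using Kfield_zero k q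
  by_cases h1 : b = 0
  · subst h1; simpa [mul_zero] using Kfield_zero k q
  apply Set.Finite.subset (Set.Finite.image2 (· + ·) (ha (q - b.order)) (hb (q - a.order)))
  rintro r ⟨hr, hrq⟩
  obtain ⟨i, hi, j, hj, rfl⟩ := support_mul_subset hr
  beta_reduce at hrq
  have hio : a.order ≤ i := order_le_of_coeff_ne_zero hi
  have hjo : b.order ≤ j := order_le_of_coeff_ne_zero hj
  exact ⟨i, ⟨hi, by linarith⟩, j, ⟨hj, by linarith⟩, rfl⟩

lemma Kfield_inv' (k : Type*) [Field k] : ∀ a ∈ Kfield k, a⁻¹ ∈ Kfield k := by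
  intro a ha
  by_cases h0 : a = 0
  · subst h0; simpa [inv_zero] using Kfield_zero k
  · exact fun q => Kfield_inv ha h0 q

/-- `Kfield k` as a subfield. -/
def KfieldSubfield (k : Type*) [Field k] : Subfield (HahnSeries ℚ k) where
  carrier := Kfield k
  zero_mem' := Kfield_zero k
  one_mem' := Kfield_one k
  add_mem' := fun {a b} ha hb => Kfield_add k a ha b hb
  neg_mem' := fun {a} ha => Kfield_neg k a ha
  mul_mem' := fun {a b} ha hb => Kfield_mul k a ha b hb
  inv_mem' := Kfield_inv' k

/-- `Kfield k` is a subfield of the field of Hahn series `HahnSeries ℚ k`: it contains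
`0` and `1` and is closed under addition, negation, multiplication and inverses of
nonzero elements; in particular it contains the subfield generated by the finitely
supported series. -/
theorem stmt19 (k : Type*) [Field k] :
    (0 : HahnSeries ℚ k) ∈ Kfield k ∧
    (1 : HahnSeries ℚ k) ∈ Kfield k ∧
    (∀ a ∈ Kfield k, ∀ b ∈ Kfield k, a + b ∈ Kfield k) ∧
    (∀ a ∈ Kfield k, -a ∈ Kfield k) ∧
    (∀ a ∈ Kfield k, ∀ b ∈ Kfield k, a * b ∈ Kfield k) ∧
    (∀ a ∈ Kfield k, a ≠ 0 → a⁻¹ ∈ Kfield k) ∧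
    (∀ a ∈ Subfield.closure {b : HahnSeries ℚ k | b.support.Finite}, a ∈ Kfield k) := by
  refine ⟨Kfield_zero k, Kfield_one k, Kfield_add k, Kfield_neg k, Kfield_mul k,
    fun a ha _ => Kfield_inv' k a ha, fun a ha => ?_⟩
  have : Subfield.closure {b : HahnSeries ℚ k | b.support.Finite} ≤ KfieldSubfield k :=
    Subfield.closure_le.mpr (fun b hb q => hb.subset (fun r hr => hr.1))
  exact this ha
end
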